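/- arXiv:2511.21526 — 8 statements merged into one kernel-verified Lean document; each statement's English description precedes it below -/
import Mathlib

section
/- In the τ-blow-up of the cycle C_σ, for every nonempty proper subset S of the vertex set, the number of edges with exactly one endpoint in S is at least 2τ. -/
/-- The τ-blow-up of the cycle `C_σ`. -/
def cycleBlowup (σ τ : ℕ) [NeZero σ] : SimpleGraph (ZMod σ × Fin τ) :=
  SimpleGraph.fromRel (fun v w => w.1 = v.1 + 1)

instance (σ τ : ℕ) [NeZero σ] : DecidableRel (cycleBlowup σ τ).Adj := fun v w =>
  decidable_of_iff (v ≠ w ∧ (w.1 = v.1 + 1 ∨ v.1 = w.1 + 1)) Iff.rfl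

/-!
Between consecutive layers `x` and `x + 1` the blow-up is complete bipartite, so if `a_x` and
`c_x` count the vertices of layer `x` inside and outside `S`, the boundary has at least
`∑ a_x c_y` edges, summed over any set of ordered pairs `(x, y)` of consecutive layers. If some
layer `x` meets both `S` and its complement, the four pairs `(x, x ± 1)`, `(x ± 1, x)` (distinct as
`σ ≥ 3`) already give `c_{x+1} + a_{x+1} + c_{x-1} + a_{x-1} = 2τ`. Otherwise every layer is full
or empty, and going around the cycle there is a step from a full to an empty layer and one from an
empty to a full layer, giving `2τ² ≥ 2τ`.
-/

open Finset

namespace SimpleGraph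

variable {V : Type*} [Fintype V] [DecidableEq V] (G : SimpleGraph V) [DecidableRel G.Adj]

def outBoundary (S : Finset V) : Finset (V × V) :=
  univ.filter fun p => G.Adj p.1 p.2 ∧ p.1 ∈ S ∧ p.2 ∉ S

theorem sum_card_mul_card_le_card_outBoundary {ι : Type*} (S : Finset V) (P : Finset ι)
    (A C : ι → Finset V) (hA : ∀ i ∈ P, A i ⊆ S) (hC : ∀ i ∈ P, Disjoint (C i) S)
    (hAC : ∀ i ∈ P, ∀ a ∈ A i, ∀ c ∈ C i, G.Adj a c)
    (hP : (P : Set ι).PairwiseDisjoint fun i => A i ×ˢ C i) :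
    ∑ i ∈ P, #(A i) * #(C i) ≤ #(G.outBoundary S) := by
  simp_rw [← card_product, ← card_biUnion hP]
  refine card_le_card fun p hp => ?_
  obtain ⟨i, hi, hp⟩ := mem_biUnion.1 hp
  obtain ⟨ha, hc⟩ := mem_product.1 hp
  exact mem_filter.2 ⟨mem_univ _, hAC i hi _ ha _ hc, hA i hi ha,
    Finset.disjoint_left.1 (hC i hi) hc⟩

end SimpleGraph

theorem ZMod.exists_and_not_add_one {n : ℕ} [NeZero n] {P : ZMod n → Prop} {a b : ZMod n}
    (ha : P a) (hb : ¬P b) : ∃ x, P x ∧ ¬P (x + 1) := by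
  by_contra! hstep
  have hall : ∀ k : ℕ, P (a + k) := by
    intro k
    induction k with
    | zero => simpa using ha
    | succ k ih => simpa [add_assoc] using hstep _ ih
  obtain ⟨k, hk⟩ := ZMod.natCast_zmod_surjective (b - a)
  exact hb (by simpa [hk] using hall k)

namespace cycleBlowup

open SimpleGraph

variable {σ τ : ℕ} [NeZero σ]

def layer (S : Finset (ZMod σ × Fin τ)) (x : ZMod σ) : Finset (ZMod σ × Fin τ) :=
  S.filter (·.1 = x)

theorem card_layer_add_card_layer_compl (S : Finset (ZMod σ × Fin τ)) (x : ZMod σ) :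
    #(layer S x) + #(layer Sᶜ x) = τ := by
  have hx : univ.filter (fun v : ZMod σ × Fin τ => v.1 = x) = {x} ×ˢ univ := by
    ext v; simp [Prod.ext_iff, eq_comm]
  rw [layer, layer, ← card_union_of_disjoint (disjoint_filter_filter disjoint_compl_right),
    ← filter_union, union_compl, hx, card_product, card_singleton, card_univ,
    Fintype.card_fin, one_mul]

theorem adj_of_fst_eq_add_one [Nontrivial (ZMod σ)] {v w : ZMod σ × Fin τ}
    (h : w.1 = v.1 + 1) : (cycleBlowup σ τ).Adj v w :=
  ⟨fun hvw => by simp [hvw] at h, Or.inl h⟩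

theorem sum_card_layer_mul_le_card_outBoundary [Nontrivial (ZMod σ)]
    (S : Finset (ZMod σ × Fin τ)) (P : Finset (ZMod σ × ZMod σ))
    (hP : ∀ q ∈ P, q.2 = q.1 + 1 ∨ q.1 = q.2 + 1) :
    ∑ q ∈ P, #(layer S q.1) * #(layer Sᶜ q.2) ≤ #((cycleBlowup σ τ).outBoundary S) := by
  refine (cycleBlowup σ τ).sum_card_mul_card_le_card_outBoundary S P _ _
    (fun q _ => filter_subset _ _) (fun q _ => ?_) (fun q hq a ha c hc => ?_) ?_
  · exact disjoint_compl_left.mono_left (filter_subset _ _)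
  · simp only [layer, mem_filter] at ha hc
    rcases hP q hq with h | h
    · exact adj_of_fst_eq_add_one (by rw [hc.2, ha.2, h])
    · exact (adj_of_fst_eq_add_one (by rw [hc.2, ha.2, h])).symm
  · intro q _ q' _ hqq'
    refine disjoint_left.2 fun p hp hp' => hqq' ?_
    simp only [layer, mem_product, mem_filter] at hp hp'
    exact Prod.ext (hp.1.2.symm.trans hp'.1.2) (hp.2.2.symm.trans hp'.2.2)

theorem two_mul_le_card_outBoundary_of_mixed_layer (h2 : (2 : ZMod σ) ≠ 0)
    {S : Finset (ZMod σ × Fin τ)} {x : ZMod σ} (hS : (layer S x).Nonempty)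
    (hSc : (layer Sᶜ x).Nonempty) : 2 * τ ≤ #((cycleBlowup σ τ).outBoundary S) := by
  have : Nontrivial (ZMod σ) := ⟨⟨2, 0, h2⟩⟩
  have h₁ : x + 1 ≠ x := by simp
  have h₂ : x - 1 ≠ x := by simp
  have h₃ : x + 1 ≠ x - 1 := fun h => h2 (by linear_combination h)
  refine le_trans ?_ (sum_card_layer_mul_le_card_outBoundary S
    {(x, x + 1), (x + 1, x), (x, x - 1), (x - 1, x)} (by simp))
  rw [sum_insert (by simp [h₁, h₃, h₁.symm]), sum_insert (by simp [h₁, h₂.symm, h₃]),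
    sum_insert (by simp [h₂]), sum_singleton]
  have ha := hS.card_pos
  have hc := hSc.card_pos
  have hp := card_layer_add_card_layer_compl S (x + 1)
  have hm := card_layer_add_card_layer_compl S (x - 1)
  nlinarith

theorem two_mul_le_card_outBoundary_of_pure_layers (h2 : (2 : ZMod σ) ≠ 0)
    {S : Finset (ZMod σ × Fin τ)} (hne : S.Nonempty) (hproper : S ≠ univ)
    (hpure : ∀ x, layer S x = ∅ ∨ layer Sᶜ x = ∅) :
    2 * τ ≤ #((cycleBlowup σ τ).outBoundary S) := by
  have : Nontrivial (ZMod σ) := ⟨⟨2, 0, h2⟩⟩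
  have hfull : ∀ x, (layer S x).Nonempty → #(layer S x) = τ := fun x hx => by
    have := card_layer_add_card_layer_compl S x
    rcases hpure x with h | h
    · simp [h] at hx
    · simpa [h] using this
  have hempty : ∀ x, ¬(layer S x).Nonempty → #(layer Sᶜ x) = τ := fun x hx => by
    simpa [not_nonempty_iff_eq_empty.1 hx] using card_layer_add_card_layer_compl S x
  obtain ⟨v, hv⟩ := hne
  obtain ⟨w, hw⟩ : ∃ w, w ∉ S := by simpa [eq_univ_iff_forall] using hproper
  have hvS : (layer S v.1).Nonempty := ⟨v, mem_filter.2 ⟨hv, rfl⟩⟩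
  have hwS : ¬(layer S w.1).Nonempty := by
    have hwSc : (layer Sᶜ w.1).Nonempty := ⟨w, mem_filter.2 ⟨mem_compl.2 hw, rfl⟩⟩
    simpa [hwSc.ne_empty] using hpure w.1
  obtain ⟨x, hx, hx'⟩ := ZMod.exists_and_not_add_one (P := fun x => (layer S x).Nonempty)
    hvS hwS
  obtain ⟨y, hy, hy'⟩ := ZMod.exists_and_not_add_one (P := fun x => ¬(layer S x).Nonempty)
    hwS (not_not_intro hvS)
  refine le_trans ?_ (sum_card_layer_mul_le_card_outBoundary S {(x, x + 1), (y + 1, y)}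
    (by simp))
  have hxy : (x, x + 1) ≠ (y + 1, y) := fun h => h2 <| by
    rw [Prod.ext_iff] at h
    linear_combination h.2 - h.1
  rw [sum_pair hxy, hfull x hx, hempty _ hx', hfull _ (not_not.1 hy'), hempty y hy]
  nlinarith [Nat.le_mul_self τ]

end cycleBlowup

open cycleBlowup in
theorem stmt_3_general (σ τ : ℕ) [NeZero σ] (hσ : 3 ≤ σ)
    (S : Finset (ZMod σ × Fin τ)) (hne : S.Nonempty) (hproper : S ≠ Finset.univ) :
    2 * τ ≤ (Finset.univ.filter (fun p : (ZMod σ × Fin τ) × (ZMod σ × Fin τ) =>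
      (cycleBlowup σ τ).Adj p.1 p.2 ∧ p.1 ∈ S ∧ p.2 ∉ S)).card := by
  have h2 : (2 : ZMod σ) ≠ 0 := by
    rw [← Nat.cast_ofNat, Ne, ZMod.natCast_eq_zero_iff]
    exact fun h => absurd (Nat.le_of_dvd two_pos h) (by omega)
  by_cases hpure : ∀ x, layer S x = ∅ ∨ layer Sᶜ x = ∅
  · exact two_mul_le_card_outBoundary_of_pure_layers h2 hne hproper hpure
  · push Not at hpure
    obtain ⟨x, hS, hSc⟩ := hpure
    exact two_mul_le_card_outBoundary_of_mixed_layer h2 hS hSc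

/-- For every nonempty proper subset `S` of the vertices of the τ-blow-up of `C_σ`,
the edge boundary of `S` (edges with exactly one endpoint in `S`, here counted as
ordered pairs `(p₁, p₂)` with `p₁ ∈ S` and `p₂ ∉ S`, which counts each boundary
edge exactly once) has size at least `2τ`. -/
theorem stmt_3 (σ τ : ℕ) [NeZero σ] (hσ : 3 ≤ σ) (hτ : 1 ≤ τ)
    (S : Finset (ZMod σ × Fin τ)) (hne : S.Nonempty) (hproper : S ≠ Finset.univ) :
    2 * τ ≤ (Finset.univ.filter (fun p : (ZMod σ × Fin τ) × (ZMod σ × Fin τ) =>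
      (cycleBlowup σ τ).Adj p.1 p.2 ∧ p.1 ∈ S ∧ p.2 ∉ S)).card :=
  stmt_3_general σ τ hσ S hne hproper
end

section
/- Let S be a subset of the cycle vertices of the blow-up graph with fasteners containing the same community as v₁ and v₂. Then |E₀↑| + 2|F \ S| ≥ 2a(στ − |S|), where E₀↑ is the set of cycle edges with exactly one endpoint in S and F is the set of fastener vertices. -/
/-!
With `s ω = |S ∩ L_ω|` and `c ω = τ - s ω`, the cut has
`∑ ω, (s ω c (ω+1) + s (ω+1) c ω) = ∑ ω, (2 s ω c ω + (s ω - s (ω+1))²)` edges.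
A layer meeting `S` pays its share `2a c ω` of the left side out of `2 s ω c ω`, as `a < 1 ≤ s ω`.
A layer missing `S` has all its fasteners in `F \ S`, and their number is
`aτ + g ω - g (ω+1)` with `g ω = fract (aτω)`, which is periodic in `ω` because `aτσ ∈ ℤ`.
So the layers missing `S` pay `2aτ` each, up to the telescoping error
`2 ∑ (g (ω+1) - g ω)` over them, which is at most `2` for every maximal run of such layers
(and `0` if the run is the whole cycle). Such a run has two ends where `s` jumps from or to `0`,
and each jump contributes at least `1` to `∑ (s ω - s (ω+1))²`.
-/

open Finset

section Layers

variable {n : ℕ} {β : Type*}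

def layerCard (S : Finset (ZMod n × β)) (ω : ZMod n) : ℕ := #{v ∈ S | v.1 = ω}

theorem layerCard_add_layerCard_compl [NeZero n] [Fintype β] [DecidableEq β]
    (S : Finset (ZMod n × β)) (ω : ZMod n) :
    layerCard S ω + layerCard Sᶜ ω = Fintype.card β := by
  have hlayer : ({v ∈ S ∪ Sᶜ | v.1 = ω} : Finset _) = {ω} ×ˢ univ := by
    ext ⟨u, w⟩; simp [eq_comm]
  rw [layerCard, layerCard, ← card_union_of_disjoint (disjoint_compl_right.mono
    (filter_subset _ _) (filter_subset _ _)), ← filter_union, hlayer, card_product,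
    card_singleton, card_univ, one_mul]

theorem sum_layerCard [NeZero n] (S : Finset (ZMod n × β)) : ∑ ω, layerCard S ω = #S :=
  (card_eq_sum_card_fiberwise fun v _ => mem_univ v.1).symm

theorem card_filter_product_eq_sum_layerCard [NeZero n] (S T : Finset (ZMod n × β))
    (d : ZMod n) :
    #{p ∈ S ×ˢ T | p.2.1 = p.1.1 + d} = ∑ ω, layerCard S ω * layerCard T (ω + d) := by
  rw [card_eq_sum_card_fiberwise fun p _ => mem_univ p.1.1]
  refine sum_congr rfl fun ω _ => ?_
  rw [layerCard, layerCard, ← card_product, filter_filter]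
  congr 1
  ext ⟨u, w⟩
  simp only [mem_filter, mem_product]
  grind

theorem card_cut_eq_sum_layerCard [NeZero n] [Fintype β] [DecidableEq β] (hn : 2 < n)
    (S : Finset (ZMod n × β)) :
    #{p : (ZMod n × β) × (ZMod n × β) |
        (p.2.1 = p.1.1 + 1 ∨ p.1.1 = p.2.1 + 1) ∧ p.1 ∈ S ∧ p.2 ∉ S} =
      ∑ ω, (layerCard S ω * layerCard Sᶜ (ω + 1) + layerCard S (ω + 1) * layerCard Sᶜ ω) := by
  have : Fact (2 < n) := ⟨hn⟩
  have hsplit : ({p : (ZMod n × β) × (ZMod n × β) |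
        (p.2.1 = p.1.1 + 1 ∨ p.1.1 = p.2.1 + 1) ∧ p.1 ∈ S ∧ p.2 ∉ S} : Finset _) =
      {p ∈ S ×ˢ Sᶜ | p.2.1 = p.1.1 + 1} ∪ {p ∈ S ×ˢ Sᶜ | p.2.1 = p.1.1 + -1} := by
    ext p
    simp only [mem_filter, mem_univ, true_and, mem_union, mem_product, mem_compl]
    grind
  have hdisj : Disjoint {p ∈ S ×ˢ Sᶜ | p.2.1 = p.1.1 + 1} {p ∈ S ×ˢ Sᶜ | p.2.1 = p.1.1 + -1} :=
    disjoint_filter.2 fun p _ h1 h2 => ZMod.neg_one_ne_one (add_left_cancel (h2.symm.trans h1))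
  rw [hsplit, card_union_of_disjoint hdisj, card_filter_product_eq_sum_layerCard,
    card_filter_product_eq_sum_layerCard, sum_add_distrib,
    ← Equiv.sum_comp (Equiv.addRight 1) fun ω => layerCard S ω * layerCard Sᶜ (ω + -1)]
  simp only [Equiv.coe_addRight, add_neg_cancel_right]

theorem cast_card_cut_eq_sum_sq {R : Type*} [CommRing R] [NeZero n] [Fintype β] [DecidableEq β]
    (hn : 2 < n) (S : Finset (ZMod n × β)) :
    (#{p : (ZMod n × β) × (ZMod n × β) |
        (p.2.1 = p.1.1 + 1 ∨ p.1.1 = p.2.1 + 1) ∧ p.1 ∈ S ∧ p.2 ∉ S} : R) =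
      ∑ ω, (2 * layerCard S ω * layerCard Sᶜ ω
        + ((layerCard S ω : R) - layerCard S (ω + 1)) ^ 2) := by
  have hcompl (ω : ZMod n) : (layerCard Sᶜ ω : R) = Fintype.card β - layerCard S ω := by
    rw [← layerCard_add_layerCard_compl S ω, Nat.cast_add, add_sub_cancel_left]
  have hshift : ∑ ω, (layerCard S (ω + 1) * layerCard Sᶜ (ω + 1) : R) =
      ∑ ω, (layerCard S ω * layerCard Sᶜ ω : R) :=
    Equiv.sum_comp (Equiv.addRight 1) fun ω => (layerCard S ω * layerCard Sᶜ ω : R)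
  rw [card_cut_eq_sum_layerCard hn, Nat.cast_sum]
  calc ∑ ω, ((layerCard S ω * layerCard Sᶜ (ω + 1) + layerCard S (ω + 1) * layerCard Sᶜ ω : ℕ) : R)
      = ∑ ω, ((layerCard S ω * layerCard Sᶜ ω : R)
          + layerCard S (ω + 1) * layerCard Sᶜ (ω + 1)
          + ((layerCard S ω : R) - layerCard S (ω + 1)) ^ 2) := by
        refine sum_congr rfl fun ω _ => ?_
        push_cast
        rw [hcompl, hcompl]
        ring
    _ = _ := by
        simp only [sum_add_distrib, hshift, mul_assoc, ← mul_sum]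
        ring

theorem sum_ite_layerCard_le_card_sdiff [NeZero n] [DecidableEq β] (F S : Finset (ZMod n × β)) :
    ∑ ω, (if layerCard S ω = 0 then layerCard F ω else 0) ≤ #(F \ S) := by
  rw [← sum_layerCard (F \ S)]
  gcongr with ω
  split_ifs with h
  · refine card_le_card fun v hv => ?_
    rw [mem_filter] at hv ⊢
    refine ⟨mem_sdiff.2 ⟨hv.1, fun hvS => ?_⟩, hv.2⟩
    rw [layerCard, card_eq_zero, filter_eq_empty_iff] at h
    exact h hvS hv.2
  · exact Nat.zero_le _

end Layers

section Fract

variable {K : Type*} [Field K] [LinearOrder K] [IsStrictOrderedRing K] [FloorRing K]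

theorem Int.fract_mul_natCast_mod {x : K} {n : ℕ} {m : ℤ} (hx : x * n = m) (k : ℕ) :
    Int.fract (x * (k % n : ℕ)) = Int.fract (x * k) := by
  conv_rhs => rw [← Nat.mod_add_div k n, Nat.cast_add, Nat.cast_mul, mul_add, ← mul_assoc, hx]
  rw [← Int.fract_add_intCast (x * (k % n : ℕ)) (m * (k / n : ℕ)), Int.cast_mul,
    Int.cast_natCast]

theorem floor_mul_val_add_one_sub_floor {x : K} {n : ℕ} [NeZero n] {m : ℤ} (hx : x * n = m)
    (ω : ZMod n) :
    ((⌊x * (ω.val + 1)⌋ - ⌊x * ω.val⌋ : ℤ) : K) =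
      x + Int.fract (x * ω.val) - Int.fract (x * (ω + 1).val) := by
  have hval : (ω + 1).val = (ω.val + 1) % n := by
    rw [← ZMod.val_natCast, Nat.cast_add, ZMod.natCast_zmod_val, Nat.cast_one]
  rw [hval, Int.fract_mul_natCast_mod hx, Int.fract, Int.fract]
  push_cast
  ring

end Fract

section CyclicBound

variable {K : Type*} [Field K] [LinearOrder K] [IsStrictOrderedRing K]

theorem two_mul_mul_le_of_add_eq {a : K} (ha : a ≤ 1) {s c τ : ℕ} (h : s + c = τ) :
    2 * a * c ≤ 2 * s * c + 2 * (if s = 0 then a * τ else 0) := by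
  split_ifs with hs
  · subst hs h
    simp [mul_assoc]
  · have : (1 : K) ≤ s := by exact_mod_cast Nat.one_le_iff_ne_zero.2 hs
    have : (0 : K) ≤ c := c.cast_nonneg
    nlinarith

theorem two_mul_sub_ite_mul_le (s s' : ℕ) {g : K} (hg0 : 0 ≤ g) (hg1 : g ≤ 1) :
    2 * ((if s = 0 then 1 else 0) - (if s' = 0 then 1 else 0)) * g ≤
      ((s : K) - s') ^ 2 + ((if s = 0 then 1 else 0) - (if s' = 0 then 1 else 0)) := by
  have one_le {k : ℕ} (hk : k ≠ 0) : (1 : K) ≤ k := by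
    exact_mod_cast Nat.one_le_iff_ne_zero.2 hk
  split_ifs with hs hs' hs'
  · simp [sq_nonneg]
  · subst hs; push_cast; nlinarith [one_le hs']
  · subst hs'; push_cast; nlinarith [one_le hs]
  · nlinarith [sq_nonneg ((s : K) - s')]

theorem two_mul_sum_le_of_fract_layers {n : ℕ} [NeZero n] {a : K} (ha : a ≤ 1) {τ : ℕ}
    {s c : ZMod n → ℕ} (hsc : ∀ ω, s ω + c ω = τ) {g φ : ZMod n → K}
    (hg0 : ∀ ω, 0 ≤ g ω) (hg1 : ∀ ω, g ω ≤ 1) (hφ : ∀ ω, φ ω = a * τ + g ω - g (ω + 1)) :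
    2 * a * ∑ ω, (c ω : K) ≤
      ∑ ω, (2 * s ω * c ω + ((s ω : K) - s (ω + 1)) ^ 2) +
        2 * ∑ ω, (if s ω = 0 then φ ω else 0) := by
  set z : ZMod n → K := fun ω => if s ω = 0 then 1 else 0
  have hφz (ω : ZMod n) : (if s ω = 0 then φ ω else 0) = z ω * φ ω := by
    simp only [z]; split_ifs <;> simp
  have hpoint (ω : ZMod n) : 2 * a * c ω ≤
      2 * s ω * c ω + ((s ω : K) - s (ω + 1)) ^ 2 + 2 * (z ω * (a * τ))
        - 2 * (z ω - z (ω + 1)) * g (ω + 1) + (z ω - z (ω + 1)) := by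
    have h1 := two_mul_mul_le_of_add_eq ha (hsc ω)
    have h2 := two_mul_sub_ite_mul_le (K := K) (s ω) (s (ω + 1)) (hg0 (ω + 1)) (hg1 (ω + 1))
    have h3 : (if s ω = 0 then a * τ else 0) = z ω * (a * τ) := by
      simp only [z]; split_ifs <;> simp
    simp only [z] at h2 ⊢
    linarith
  have hshift_zg : ∑ ω, z (ω + 1) * g (ω + 1) = ∑ ω, z ω * g ω :=
    Equiv.sum_comp (Equiv.addRight 1) fun ω => z ω * g ω
  have hshift_z : ∑ ω, z (ω + 1) = ∑ ω, z ω := Equiv.sum_comp (Equiv.addRight 1) z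
  calc 2 * a * ∑ ω, (c ω : K) = ∑ ω, 2 * a * c ω := by rw [mul_sum]
    _ ≤ _ := sum_le_sum fun ω _ => hpoint ω
    _ = ∑ ω, (2 * s ω * c ω + ((s ω : K) - s (ω + 1)) ^ 2) + 2 * ∑ ω, z ω * φ ω
          + 2 * (∑ ω, z (ω + 1) * g (ω + 1) - ∑ ω, z ω * g ω)
          + (∑ ω, z ω - ∑ ω, z (ω + 1)) := by
        simp only [hφ, mul_sum, ← sum_sub_distrib, ← sum_add_distrib]
        exact sum_congr rfl fun ω _ => by ring
    _ = _ := by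
        rw [hshift_zg, hshift_z, sub_self, sub_self, mul_zero, add_zero, add_zero]
        simp only [hφz]

end CyclicBound

theorem stmt_5_general (τ σ : ℕ) [NeZero σ] (a : ℚ)
    (ha1 : a < 1) (hσ3 : 3 ≤ σ)
    (m : ℤ) (heven : a * σ * τ = 2 * (m : ℚ))
    (F : Finset (ZMod σ × Fin τ))
    (hlayer : ∀ ω : Fin σ, ((F.filter (fun v => v.1 = (ω : ZMod σ))).card : ℤ)
        = ⌊a * ((ω : ℚ) + 1) * τ⌋ - ⌊a * (ω : ℚ) * τ⌋)
    (S : Finset (ZMod σ × Fin τ)) :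
    2 * a * ((σ * τ : ℚ) - S.card) ≤
      ((Finset.univ.filter (fun p : (ZMod σ × Fin τ) × (ZMod σ × Fin τ) =>
        (p.2.1 = p.1.1 + 1 ∨ p.1.1 = p.2.1 + 1) ∧ p.1 ∈ S ∧ p.2 ∉ S)).card : ℚ)
      + 2 * ((F \ S).card : ℚ) := by
  have hperiod : a * τ * σ = ((2 * m : ℤ) : ℚ) := by push_cast; rw [← heven]; ring
  have hφ (ω : ZMod σ) : (layerCard F ω : ℚ) =
      a * τ + Int.fract (a * τ * ω.val) - Int.fract (a * τ * (ω + 1).val) := by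
    have := hlayer ⟨ω.val, ω.val_lt⟩
    simp only [ZMod.natCast_zmod_val, mul_right_comm a _ (τ : ℚ)] at this
    rw [← floor_mul_val_add_one_sub_floor hperiod, layerCard]
    exact_mod_cast this
  have hsc (ω : ZMod σ) : layerCard S ω + layerCard Sᶜ ω = τ := by
    simpa using layerCard_add_layerCard_compl S ω
  have hcompl : (σ * τ : ℚ) - #S = ∑ ω, (layerCard Sᶜ ω : ℚ) := by
    rw [← sum_layerCard S, Nat.cast_sum, sub_eq_iff_eq_add, ← sum_add_distrib]
    simp only [← Nat.cast_add, add_comm (layerCard Sᶜ _), hsc, sum_const, card_univ, ZMod.card,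
      nsmul_eq_mul]
  have hfast := sum_ite_layerCard_le_card_sdiff F S
  rw [hcompl, cast_card_cut_eq_sum_sq hσ3]
  refine (two_mul_sum_le_of_fract_layers ha1.le hsc (g := fun ω => Int.fract (a * τ * ω.val))
    (fun ω => Int.fract_nonneg _) (fun ω => (Int.fract_lt_one _).le) hφ).trans ?_
  gcongr
  exact_mod_cast hfast

/-- In the τ-blow-up of `C_σ` (layers `L_ω = {ω} × Fin τ`, consecutive layers fully
joined), with fastener set `F` spread so that layer `ω` (0-indexed) contains exactly
`⌊a(ω+1)τ⌋ − ⌊aωτ⌋` fastener vertices, and `S` the set of cycle vertices in the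
distinguished community of `v₁, v₂`, the number `|E₀↑|` of cycle edges with exactly one
endpoint in `S` (counted as ordered pairs `(p₁,p₂)` with `p₁ ∈ S`, `p₂ ∉ S`, which counts
each such edge once) satisfies `|E₀↑| + 2|F \ S| ≥ 2a(στ − |S|)`. -/
theorem stmt_5 (τ σ : ℕ) [NeZero σ] (a : ℚ) (hτ : 1 ≤ τ)
    (ha0 : 0 < a) (ha1 : a < 1) (hσ3 : 3 ≤ σ) (hσa : 2 / a ≤ (σ : ℚ))
    (m : ℤ) (heven : a * σ * τ = 2 * (m : ℚ))
    (F : Finset (ZMod σ × Fin τ)) (hFcard : (F.card : ℚ) = a * σ * τ)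
    (hlayer : ∀ ω : Fin σ, ((F.filter (fun v => v.1 = (ω : ZMod σ))).card : ℤ)
        = ⌊a * ((ω : ℚ) + 1) * τ⌋ - ⌊a * (ω : ℚ) * τ⌋)
    (S : Finset (ZMod σ × Fin τ)) :
    2 * a * ((σ * τ : ℚ) - S.card) ≤
      ((Finset.univ.filter (fun p : (ZMod σ × Fin τ) × (ZMod σ × Fin τ) =>
        (p.2.1 = p.1.1 + 1 ∨ p.1.1 = p.2.1 + 1) ∧ p.1 ∈ S ∧ p.2 ∉ S)).card : ℚ)
      + 2 * ((F \ S).card : ℚ) :=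
  stmt_5_general τ σ a ha1 hσ3 m heven F hlayer S
end

section
/- For the blow-up graph with fasteners G_{σ,τ,a} = (V,E): for any positive integer I ≤ στ and any partition of V into I+1 communities such that v₁ and v₂ lie in the same community, the number |E^≠| of edges of E joining vertices of distinct communities satisfies |E^≠| ≥ I(τ + a). -/
/-!
Let `i₀` be the community of `v₁, v₂`, `C_i(ω)` the number of vertices of layer `ω` in community
`i`, `n_i = ∑_ω C_i(ω)` and `φ(ω)` the number of fasteners in layer `ω`. The uncut cycle edges
number `∑_i ∑_ω C_i(ω) C_i(ω+1)` and at most `∑_ω min(C_{i₀}(ω), φ(ω))` fastener edges are uncut.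
As `στ² + aστ = (τ + a) ∑_i n_i`, it suffices to bound each community separately:
* a community `i ≠ i₀` meets the cycle and, unless it covers it, misses some vertex, whence
  `∑_ω C_i(ω) C_i(ω+1) + τ + a ≤ (τ + a) n_i`;
* the fasteners are spread as `φ(ω) = aτ + ρ(ω) − ρ(ω+1)` with `ρ` a fractional part, periodic
  because `aστ ∈ ℤ`, and a potential telescoping around the cycle gives
  `∑_ω C_{i₀}(ω) C_{i₀}(ω+1) + ∑_ω min(C_{i₀}(ω), φ(ω)) ≤ (τ + a) n_{i₀}`.
If a community `i ≠ i₀` covers the whole cycle, then `I = 1` and all `aστ ≥ 2τ` fastener edges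
are cut.
-/

open Finset

/-- Vertex set of the blow-up graph with fasteners: the `στ` cycle nodes plus
the two distinguished nodes `v₁ = Sum.inr 0` and `v₂ = Sum.inr 1`. -/
abbrev FVert (σ τ : ℕ) := (ZMod σ × Fin τ) ⊕ Fin 2

/-- Adjacency of the blow-up graph with fasteners. -/
def fadj {σ τ : ℕ} [NeZero σ] (F1 F2 : Finset (ZMod σ × Fin τ)) :
    FVert σ τ → FVert σ τ → Bool
  | Sum.inl v, Sum.inl w => decide (w.1 = v.1 + 1 ∨ v.1 = w.1 + 1)
  | Sum.inl v, Sum.inr k => (decide (k = 0) && decide (v ∈ F1)) || (decide (k = 1) && decide (v ∈ F2))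
  | Sum.inr k, Sum.inl v => (decide (k = 0) && decide (v ∈ F1)) || (decide (k = 1) && decide (v ∈ F2))
  | Sum.inr _, Sum.inr _ => false

/-- The blow-up graph with fasteners `G_{σ,τ,a}`. -/
def fastenedBlowup {σ τ : ℕ} [NeZero σ] (F1 F2 : Finset (ZMod σ × Fin τ)) :
    SimpleGraph (FVert σ τ) :=
  SimpleGraph.fromRel (fun v w => fadj F1 F2 v w = true)

instance {σ τ : ℕ} [NeZero σ] (F1 F2 : Finset (ZMod σ × Fin τ)) :
    DecidableRel (fastenedBlowup F1 F2).Adj := fun v w =>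
  decidable_of_iff (v ≠ w ∧ (fadj F1 F2 v w = true ∨ fadj F1 F2 w v = true)) Iff.rfl

theorem ZMod.apply_eq_of_forall_apply_add_one {σ : ℕ} [NeZero σ] {α : Type*} {f : ZMod σ → α}
    (hf : ∀ ω, f (ω + 1) = f ω) (ω : ZMod σ) : f ω = f 0 := by
  rw [← ZMod.natCast_zmod_val ω]
  induction ω.val with
  | zero => rw [Nat.cast_zero]
  | succ n ih => rw [Nat.cast_succ, hf, ih]

/-- `τ ∑ c − ∑ c(ω) c(ω+1)` is both `∑ c(ω) (τ − c(ω+1))` and `∑ c(ω+1) (τ − c(ω))`; where `c`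
jumps, one summand of the appropriate form is already at least `τ`. -/
theorem sum_mul_add_one_add_le {σ τ : ℕ} [NeZero σ] (hσ : 2 ≤ σ) (c : ZMod σ → ℕ)
    (hle : ∀ ω, c ω ≤ τ) (hpos : ∃ ω, c ω ≠ 0) (hlt : ∃ ω, c ω ≠ τ) :
    ∑ ω, c ω * c (ω + 1) + τ ≤ τ * ∑ ω, c ω := by
  have hfwd : τ * ∑ ω, c ω = ∑ ω, c ω * c (ω + 1) + ∑ ω, c ω * (τ - c (ω + 1)) := by
    rw [← sum_add_distrib, mul_sum]
    refine sum_congr rfl fun ω _ => ?_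
    rw [← Nat.mul_add, Nat.add_sub_cancel' (hle _), mul_comm]
  have hbwd : τ * ∑ ω, c ω = ∑ ω, c ω * c (ω + 1) + ∑ ω, c (ω + 1) * (τ - c ω) := by
    rw [← sum_add_distrib, ← Fintype.sum_equiv (Equiv.addRight 1) (fun ω => c (ω + 1)) c
      (fun _ => rfl), mul_sum]
    refine sum_congr rfl fun ω _ => ?_
    rw [mul_comm (c ω), ← Nat.mul_add, Nat.add_sub_cancel' (hle _), mul_comm]
  have hjump : ∀ x y, x < y → y ≤ τ → τ ≤ y * (τ - x) := fun x y hxy hy => by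
    obtain ⟨e, rfl⟩ := Nat.exists_eq_add_of_lt (hxy.trans_le hy)
    rw [Nat.add_assoc, Nat.add_sub_cancel_left]
    nlinarith
  by_cases hvaries : ∃ ω, c ω ≠ c (ω + 1)
  · obtain ⟨ω, hω⟩ := hvaries
    rcases hω.lt_or_gt with h | h
    · rw [hbwd, add_le_add_iff_left]
      exact (hjump _ _ h (hle _)).trans (single_le_sum (f := fun ω => c (ω + 1) * (τ - c ω))
        (fun _ _ => Nat.zero_le _) (mem_univ ω))
    · rw [hfwd, add_le_add_iff_left]
      exact (hjump _ _ h (hle _)).trans (single_le_sum (f := fun ω => c ω * (τ - c (ω + 1)))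
        (fun _ _ => Nat.zero_le _) (mem_univ ω))
  · push Not at hvaries
    have hconst : ∀ ω, c ω = c 0 :=
      ZMod.apply_eq_of_forall_apply_add_one fun ω => (hvaries ω).symm
    obtain ⟨ω₁, h₁⟩ := hpos
    obtain ⟨ω₂, h₂⟩ := hlt
    rw [hconst] at h₁ h₂
    have h₀ := hle 0
    simp only [hconst, sum_const, card_univ, ZMod.card, smul_eq_mul]
    obtain ⟨d, hd⟩ := Nat.exists_eq_add_of_lt (lt_of_le_of_ne h₀ h₂)
    rw [hd]
    have hk := Nat.pos_of_ne_zero h₁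
    generalize c 0 = k at hk ⊢
    nlinarith [Nat.mul_le_mul_right k hσ]

/-- Over a run of full layers (`c = τ`) the excess `φ − aτ = ρ(ω) − ρ(ω+1)` telescopes; the
potential carries the gain `(1 − a)(τ − 1)` of the layer entering the run, plus `1 − ρ`, to the
first non-full layer after it, where the `τ` cut edges out of the run pay for it. -/
def fullRunPotential (a : ℚ) (τ x : ℕ) (r : ℚ) : ℚ :=
  if x = τ then (1 - a) * (τ - 1) + 1 - r else 0

theorem min_sub_le_fullRunPotential_sub {a r r' : ℚ} {τ x y f : ℕ} (ha0 : 0 ≤ a)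
    (ha1 : a ≤ 1) (hx : x ≤ τ) (hy : y ≤ τ) (hr'0 : 0 ≤ r') (hr'1 : r' < 1)
    (hf : (f : ℚ) = a * τ + r - r') :
    (min x f : ℕ) - a * x - x * (τ - y : ℚ)
      ≤ fullRunPotential a τ y r' - fullRunPotential a τ x r := by
  have hmx : ((min x f : ℕ) : ℚ) ≤ x := by exact_mod_cast min_le_left x f
  have hmf : ((min x f : ℕ) : ℚ) ≤ f := by exact_mod_cast min_le_right x f
  have hxQ : (x : ℚ) ≤ τ := by exact_mod_cast hx
  have hyQ : (y : ℚ) ≤ τ := by exact_mod_cast hy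
  have hx0 : (0 : ℚ) ≤ x := x.cast_nonneg
  unfold fullRunPotential
  by_cases hxτ : x = τ <;> by_cases hyτ : y = τ <;> simp only [hxτ, hyτ, if_true, if_false]
  · subst hxτ hyτ
    linarith
  · have : (y : ℚ) + 1 ≤ τ := by exact_mod_cast lt_of_le_of_ne hy hyτ
    subst hxτ
    nlinarith
  · have : (x : ℚ) + 1 ≤ τ := by exact_mod_cast lt_of_le_of_ne hx hxτ
    subst hyτ
    nlinarith
  · have : (y : ℚ) + 1 ≤ τ := by exact_mod_cast lt_of_le_of_ne hy hyτ
    nlinarith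

theorem sum_mul_add_one_add_sum_min_le {σ τ : ℕ} [NeZero σ] {a : ℚ} (ha0 : 0 ≤ a)
    (ha1 : a ≤ 1) (c φ : ZMod σ → ℕ) (ρ : ZMod σ → ℚ) (hc : ∀ ω, c ω ≤ τ)
    (hρ0 : ∀ ω, 0 ≤ ρ ω) (hρ1 : ∀ ω, ρ ω < 1)
    (hφ : ∀ ω, (φ ω : ℚ) = a * τ + ρ ω - ρ (ω + 1)) :
    ((∑ ω, c ω * c (ω + 1) + ∑ ω, min (c ω) (φ ω) : ℕ) : ℚ) ≤ (τ + a) * ∑ ω, (c ω : ℚ) := by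
  set b : ZMod σ → ℚ := fun ω => fullRunPotential a τ (c ω) (ρ ω)
  have htelescope : ∑ ω, (b (ω + 1) - b ω) = 0 := by
    rw [sum_sub_distrib, Fintype.sum_equiv (Equiv.addRight 1) (fun ω => b (ω + 1)) b
      (fun _ => rfl), sub_self]
  have hstep : ∑ ω, (((min (c ω) (φ ω) : ℕ) : ℚ) - a * c ω - c ω * (τ - c (ω + 1))) ≤ 0 :=
    htelescope ▸ sum_le_sum fun ω _ =>
      min_sub_le_fullRunPotential_sub ha0 ha1 (hc ω) (hc (ω + 1)) (hρ0 _) (hρ1 _) (hφ ω)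
  simp only [sum_sub_distrib, mul_sub, ← mul_sum] at hstep
  rw [← sum_mul] at hstep
  simp only [Nat.cast_add, Nat.cast_sum, Nat.cast_mul]
  linarith

section FloorRing

variable {K : Type*} [CommRing K] [LinearOrder K] [IsOrderedRing K] [FloorRing K]

theorem Int.fract_natCast_mul_eq_of_natCast_eq {σ x y : ℕ} {β : K} (hβ : ∃ m : ℤ, σ * β = m)
    (h : (x : ZMod σ) = y) : Int.fract (x * β) = Int.fract (y * β) := by
  obtain ⟨m, hm⟩ := hβ
  obtain ⟨k, hk⟩ := (ZMod.natCast_eq_natCast_iff _ _ _).1 h |> Nat.modEq_iff_dvd.1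
  refine Int.fract_eq_fract.2 ⟨-(k * m), ?_⟩
  have hk' : (y : K) - x = σ * k := by exact_mod_cast hk
  push_cast
  linear_combination (-β) * hk' - k * hm

theorem ZMod.floor_val_add_one_mul_sub_floor_val_mul {σ : ℕ} [NeZero σ] {β : K}
    (hβ : ∃ m : ℤ, σ * β = m) (ω : ZMod σ) :
    ((⌊(ω.val + 1) * β⌋ - ⌊ω.val * β⌋ : ℤ) : K)
      = β + Int.fract (ω.val * β) - Int.fract ((ω + 1).val * β) := by
  have hval : ((ω + 1).val : ZMod σ) = ((ω.val + 1 : ℕ) : ZMod σ) := by simp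
  rw [Int.fract_natCast_mul_eq_of_natCast_eq hβ hval, Int.fract, Int.fract]
  push_cast
  ring

end FloorRing

namespace FVert

variable {σ τ : ℕ}

def edgePair : (ZMod σ × Fin τ × Fin τ) ⊕ (ZMod σ × Fin τ) ⊕ (ZMod σ × Fin τ) →
    FVert σ τ × FVert σ τ
  | .inl x => (.inl (x.1, x.2.1), .inl (x.1 + 1, x.2.2))
  | .inr (.inl u) => (.inl u, .inr 0)
  | .inr (.inr u) => (.inl u, .inr 1)

theorem edgePair_injective : Function.Injective (edgePair (σ := σ) (τ := τ)) := by
  rintro (x | u | u) (y | w | w) h <;> simp_all [edgePair, Prod.ext_iff]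

theorem edgePair_ne_swap (hσ : 3 ≤ σ)
    (z z' : (ZMod σ × Fin τ × Fin τ) ⊕ (ZMod σ × Fin τ) ⊕ (ZMod σ × Fin τ)) :
    edgePair z ≠ (edgePair z').swap := by
  have : (2 : ZMod σ) ≠ 0 := by
    have : ((2 : ℕ) : ZMod σ) ≠ 0 := by
      rw [Ne, ZMod.natCast_eq_zero_iff]
      exact Nat.not_dvd_of_pos_of_lt two_pos hσ
    exact_mod_cast this
  intro h
  rcases z with x | u | u <;> rcases z' with y | w | w <;> simp [edgePair, Prod.ext_iff] at h
  apply this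
  linear_combination h.2.1 - h.1.1

end FVert

section

variable {σ τ : ℕ} [NeZero σ] (F1 F2 : Finset (ZMod σ × Fin τ))

theorem fastenedBlowup_adj_inl_inl {v w : ZMod σ × Fin τ} (hσ : 1 < σ) (h : w.1 = v.1 + 1) :
    (fastenedBlowup F1 F2).Adj (.inl v) (.inl w) := by
  have : Fact (1 < σ) := ⟨hσ⟩
  refine ⟨fun hvw => ?_, .inl (by simp [fadj, h])⟩
  cases hvw
  simp at h

theorem fastenedBlowup_adj_inl_inr_zero {u : ZMod σ × Fin τ} (hu : u ∈ F1) :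
    (fastenedBlowup F1 F2).Adj (.inl u) (.inr 0) :=
  ⟨by simp, .inl (by simp [fadj, hu])⟩

theorem fastenedBlowup_adj_inl_inr_one {u : ZMod σ × Fin τ} (hu : u ∈ F2) :
    (fastenedBlowup F1 F2).Adj (.inl u) (.inr 1) :=
  ⟨by simp, .inl (by simp [fadj, hu])⟩

end

theorem two_mul_card_le_card_cut {σ τ : ℕ} [NeZero σ] (hσ : 3 ≤ σ)
    (F1 F2 : Finset (ZMod σ × Fin τ)) {κ : Type*} [DecidableEq κ] (c : FVert σ τ → κ) :
    2 * (#{x : ZMod σ × Fin τ × Fin τ | c (.inl (x.1, x.2.1)) ≠ c (.inl (x.1 + 1, x.2.2))}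
        + #{u ∈ F1 | c (.inl u) ≠ c (.inr 0)} + #{u ∈ F2 | c (.inl u) ≠ c (.inr 1)})
      ≤ #{p : FVert σ τ × FVert σ τ | (fastenedBlowup F1 F2).Adj p.1 p.2 ∧ c p.1 ≠ c p.2} := by
  set Kc := ({x : ZMod σ × Fin τ × Fin τ | c (.inl (x.1, x.2.1)) ≠ c (.inl (x.1 + 1, x.2.2))} :
    Finset _)
  set Kf1 := {u ∈ F1 | c (.inl u) ≠ c (.inr 0)}
  set Kf2 := {u ∈ F2 | c (.inl u) ≠ c (.inr 1)}
  set S := Kc.disjSum (Kf1.disjSum Kf2)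
  set e := FVert.edgePair (σ := σ) (τ := τ)
  have hcut : ∀ z ∈ S, (fastenedBlowup F1 F2).Adj (e z).1 (e z).2 ∧ c (e z).1 ≠ c (e z).2 := by
    rintro (x | u | u) hz <;>
      simp only [S, Kc, Kf1, Kf2, inl_mem_disjSum, inr_mem_disjSum, mem_filter] at hz
    · exact ⟨fastenedBlowup_adj_inl_inl F1 F2 (by omega) rfl, hz.2⟩
    · exact ⟨fastenedBlowup_adj_inl_inr_zero F1 F2 hz.1, hz.2⟩
    · exact ⟨fastenedBlowup_adj_inl_inr_one F1 F2 hz.1, hz.2⟩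
  have hS : #S = #Kc + #Kf1 + #Kf2 := by rw [card_disjSum, card_disjSum, add_assoc]
  rw [← hS, two_mul]
  calc #S + #S = #(S.image e) + #(S.image (Prod.swap ∘ e)) := by
        rw [card_image_of_injective _ FVert.edgePair_injective,
          card_image_of_injective _ (Prod.swap_injective.comp FVert.edgePair_injective)]
    _ = #(S.image e ∪ S.image (Prod.swap ∘ e)) := by
        refine (card_union_of_disjoint (disjoint_left.2 ?_)).symm
        simp only [mem_image, Function.comp_apply, not_exists, not_and]
        rintro _ ⟨z, -, rfl⟩ z' - h
        exact FVert.edgePair_ne_swap hσ z z' h.symm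
    _ ≤ _ := by
        refine card_le_card (union_subset ?_ ?_) <;>
          simp only [subset_iff, mem_image, mem_filter, mem_univ, true_and, Function.comp_apply]
        · rintro _ ⟨z, hz, rfl⟩
          exact hcut z hz
        · rintro _ ⟨z, hz, rfl⟩
          exact ⟨(hcut z hz).1.symm, (hcut z hz).2.symm⟩

theorem card_filter_apply_fst_eq_apply_snd {α β κ : Type*} [Fintype α] [Fintype β] [Fintype κ]
    [DecidableEq κ] (f : α → κ) (g : β → κ) :
    #{p : α × β | f p.1 = g p.2} = ∑ i, #{a | f a = i} * #{b | g b = i} := by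
  rw [card_eq_sum_card_fiberwise (f := fun p : α × β => f p.1) (t := univ)
    (fun _ _ => mem_univ _)]
  refine sum_congr rfl fun i _ => ?_
  rw [← card_product]
  congr 1
  ext ⟨a, b⟩
  simp only [mem_filter, mem_univ, true_and, mem_product]
  constructor
  · rintro ⟨h, rfl⟩; exact ⟨rfl, h.symm⟩
  · rintro ⟨rfl, h⟩; exact ⟨h.symm, rfl⟩

section LayerCount

variable {σ τ : ℕ} {κ : Type*} [DecidableEq κ]

def layerCount (g : ZMod σ × Fin τ → κ) (i : κ) (ω : ZMod σ) : ℕ := #{t | g (ω, t) = i}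

variable (g : ZMod σ × Fin τ → κ)

theorem layerCount_le (i : κ) (ω : ZMod σ) : layerCount g i ω ≤ τ :=
  (card_filter_le _ _).trans_eq (card_fin τ)

theorem layerCount_ne_zero {v : ZMod σ × Fin τ} {i : κ} (h : g v = i) : layerCount g i v.1 ≠ 0 :=
  card_ne_zero_of_mem (mem_filter.2 ⟨mem_univ v.2, h⟩)

theorem layerCount_ne {v : ZMod σ × Fin τ} {i : κ} (h : g v ≠ i) : layerCount g i v.1 ≠ τ := by
  intro hv
  exact h (card_filter_eq_iff.1 (hv.trans (card_fin τ).symm) v.2 (mem_univ _))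

theorem card_filter_le_sum_min_layerCount [NeZero σ] (F : Finset (ZMod σ × Fin τ)) (i : κ) :
    #{u ∈ F | g u = i} ≤ ∑ ω, min (layerCount g i ω) #{u ∈ F | u.1 = ω} := by
  rw [card_eq_sum_card_fiberwise (f := Prod.fst) (t := univ) (fun _ _ => mem_univ _)]
  refine sum_le_sum fun ω _ =>
    le_min ?_ (card_le_card (filter_subset_filter _ (filter_subset _ _)))
  refine card_le_card_of_injOn Prod.snd (fun u hu => ?_) fun u hu w hw h => ?_
  · simp only [coe_filter, mem_filter, Set.mem_ofPred_eq] at hu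
    simp only [coe_filter, mem_univ, true_and, Set.mem_ofPred_eq]
    rw [← hu.2]
    exact hu.1.2
  · simp only [coe_filter, Set.mem_ofPred_eq] at hu hw
    exact Prod.ext (hu.2.trans hw.2.symm) h

variable [Fintype κ]

theorem sum_layerCount (ω : ZMod σ) : ∑ i, layerCount g i ω = τ :=
  (card_eq_sum_card_fiberwise fun _ _ => mem_univ _).symm.trans (card_fin τ)

theorem sum_sum_layerCount [NeZero σ] : ∑ i, ∑ ω, layerCount g i ω = σ * τ := by
  rw [sum_comm]
  simp [sum_layerCount]

theorem card_cycleCut_add_sum_layerCount_mul [NeZero σ] :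
    #{x : ZMod σ × Fin τ × Fin τ | g (x.1, x.2.1) ≠ g (x.1 + 1, x.2.2)}
      + ∑ i, ∑ ω, layerCount g i ω * layerCount g i (ω + 1) = σ * (τ * τ) := by
  have huncut : #{x : ZMod σ × Fin τ × Fin τ | g (x.1, x.2.1) = g (x.1 + 1, x.2.2)}
      = ∑ i, ∑ ω, layerCount g i ω * layerCount g i (ω + 1) := by
    rw [sum_comm, card_filter, Fintype.sum_prod_type]
    refine sum_congr rfl fun ω _ => ?_
    rw [← card_filter]
    exact card_filter_apply_fst_eq_apply_snd (fun t => g (ω, t)) (fun t => g (ω + 1, t))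
  rw [← huncut, add_comm, card_filter_add_card_filter_not]
  simp

end LayerCount

section

variable {σ τ : ℕ} [NeZero σ] {κ : Type*} [Fintype κ] [DecidableEq κ]

theorem card_erase_mul_add_sum_le_of_forall_exists_ne (hσ : 2 ≤ σ) {a : ℚ} (ha0 : 0 ≤ a)
    (ha1 : a ≤ 1) (g : ZMod σ × Fin τ → κ) (i₀ : κ) (hg : ∀ i ≠ i₀, ∃ v, g v = i)
    (hmixed : ∀ i ≠ i₀, ∃ v, g v ≠ i) (φ : ZMod σ → ℕ) (ρ : ZMod σ → ℚ)
    (hρ0 : ∀ ω, 0 ≤ ρ ω) (hρ1 : ∀ ω, ρ ω < 1)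
    (hφ : ∀ ω, (φ ω : ℚ) = a * τ + ρ ω - ρ (ω + 1)) :
    (#(univ.erase i₀) : ℚ) * (τ + a)
      + ((∑ i, ∑ ω, layerCount g i ω * layerCount g i (ω + 1)
        + ∑ ω, min (layerCount g i₀ ω) (φ ω) : ℕ) : ℚ) ≤ (τ + a) * (σ * τ) := by
  set D : κ → ℕ := fun i => ∑ ω, layerCount g i ω * layerCount g i (ω + 1)
  set n : κ → ℕ := fun i => ∑ ω, layerCount g i ω
  have hother : ∀ i ∈ univ.erase i₀, (D i : ℚ) + (τ + a) ≤ (τ + a) * n i := by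
    intro i hi
    obtain ⟨v, hv⟩ := hg i (ne_of_mem_erase hi)
    obtain ⟨w, hw⟩ := hmixed i (ne_of_mem_erase hi)
    have hD : D i + τ ≤ τ * n i := sum_mul_add_one_add_le hσ (layerCount g i)
      (layerCount_le g i) ⟨_, layerCount_ne_zero g hv⟩ ⟨_, layerCount_ne g hw⟩
    have hn : 1 ≤ n i := (Nat.one_le_iff_ne_zero.2 (layerCount_ne_zero g hv)).trans
      (single_le_sum (f := layerCount g i) (fun _ _ => Nat.zero_le _) (mem_univ v.1))
    have hDQ : (D i : ℚ) + τ ≤ τ * n i := by exact_mod_cast hD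
    have hnQ : (1 : ℚ) ≤ n i := by exact_mod_cast hn
    nlinarith
  have hi₀ := sum_mul_add_one_add_sum_min_le ha0 ha1 (layerCount g i₀) φ ρ
    (layerCount_le g i₀) hρ0 hρ1 hφ
  have hsum := sum_le_sum hother
  rw [sum_add_distrib, sum_const, nsmul_eq_mul, ← mul_sum] at hsum
  have htotal : ∑ i, (n i : ℚ) = σ * τ := by exact_mod_cast sum_sum_layerCount g
  rw [← add_sum_erase _ _ (mem_univ i₀)] at htotal
  have hsplit := add_sum_erase univ (fun i => (D i : ℚ)) (mem_univ i₀)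
  simp only [Nat.cast_add, Nat.cast_sum, Nat.cast_mul, n, D] at hi₀ hsum htotal hsplit ⊢
  linear_combination hi₀ + hsum + (τ + a) * htotal - hsplit

theorem card_erase_mul_add_sum_le_of_forall_apply_eq {a : ℚ} (haτ : a ≤ τ) (haσ : 2 ≤ a * σ)
    (g : ZMod σ × Fin τ → κ) (i₀ : κ) (hg : ∀ i ≠ i₀, ∃ v, g v = i) {i₁ : κ} (hi₁ : i₁ ≠ i₀)
    (hall : ∀ v, g v = i₁) (φ : ZMod σ → ℕ) :
    (#(univ.erase i₀) : ℚ) * (τ + a)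
      + ((∑ i, ∑ ω, layerCount g i ω * layerCount g i (ω + 1)
        + ∑ ω, min (layerCount g i₀ ω) (φ ω) : ℕ) : ℚ) ≤ (τ + a) * (σ * τ) := by
  have hcount : ∀ i ω, layerCount g i ω = if i₁ = i then τ else 0 := by
    intro i ω
    simp only [layerCount, hall]
    split_ifs <;> simp [*]
  have hcard : #(univ.erase i₀) ≤ 1 := card_le_one.2 fun i hi j hj => by
    obtain ⟨v, rfl⟩ := hg i (ne_of_mem_erase hi)
    obtain ⟨w, rfl⟩ := hg j (ne_of_mem_erase hj)
    rw [hall, hall]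
  have hD : ∑ i, ∑ ω, layerCount g i ω * layerCount g i (ω + 1) = σ * (τ * τ) := by
    simp [hcount]
  have hmin : ∑ ω, min (layerCount g i₀ ω) (φ ω) = 0 := by simp [hcount, hi₁]
  have hcardQ : (#(univ.erase i₀) : ℚ) ≤ 1 := by exact_mod_cast hcard
  rw [hD, hmin]
  push_cast
  nlinarith

theorem card_erase_mul_add_sum_le (hσ : 2 ≤ σ) {a : ℚ} (ha0 : 0 ≤ a) (ha1 : a ≤ 1)
    (haτ : a ≤ τ) (haσ : 2 ≤ a * σ) (g : ZMod σ × Fin τ → κ) (i₀ : κ)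
    (hg : ∀ i ≠ i₀, ∃ v, g v = i) (φ : ZMod σ → ℕ) (ρ : ZMod σ → ℚ)
    (hρ0 : ∀ ω, 0 ≤ ρ ω) (hρ1 : ∀ ω, ρ ω < 1)
    (hφ : ∀ ω, (φ ω : ℚ) = a * τ + ρ ω - ρ (ω + 1)) :
    (#(univ.erase i₀) : ℚ) * (τ + a)
      + ((∑ i, ∑ ω, layerCount g i ω * layerCount g i (ω + 1)
        + ∑ ω, min (layerCount g i₀ ω) (φ ω) : ℕ) : ℚ) ≤ (τ + a) * (σ * τ) := by
  by_cases hmono : ∃ i₁ ≠ i₀, ∀ v, g v = i₁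
  · obtain ⟨i₁, hi₁, hall⟩ := hmono
    exact card_erase_mul_add_sum_le_of_forall_apply_eq haτ haσ g i₀ hg hi₁ hall φ
  · push Not at hmono
    exact card_erase_mul_add_sum_le_of_forall_exists_ne hσ ha0 ha1 g i₀ hg hmono φ ρ hρ0 hρ1 hφ

end

theorem stmt_6_general (τ σ : ℕ) [NeZero σ] (a : ℚ) (hτ : 1 ≤ τ)
    (ha0 : 0 < a) (ha1 : a < 1) (hσ3 : 3 ≤ σ) (hσa : 2 / a ≤ (σ : ℚ))
    (m : ℤ) (heven : a * σ * τ = 2 * (m : ℚ))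
    (F1 F2 : Finset (ZMod σ × Fin τ)) (hdisj : Disjoint F1 F2)
    (hF1 : (F1.card : ℚ) = a * σ * τ / 2) (hF2 : (F2.card : ℚ) = a * σ * τ / 2)
    (hlayer : ∀ ω : Fin σ, (((F1 ∪ F2).filter (fun v => v.1 = (ω : ZMod σ))).card : ℤ)
        = ⌊a * ((ω : ℚ) + 1) * τ⌋ - ⌊a * (ω : ℚ) * τ⌋)
    (I : ℕ)
    (c : FVert σ τ → Fin (I + 1)) (hsurj : Function.Surjective c)
    (hc : c (Sum.inr 0) = c (Sum.inr 1)) :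
    2 * (I : ℚ) * (τ + a) ≤
      ((Finset.univ.filter (fun p : FVert σ τ × FVert σ τ =>
        (fastenedBlowup F1 F2).Adj p.1 p.2 ∧ c p.1 ≠ c p.2)).card : ℚ) := by
  let g : ZMod σ × Fin τ → Fin (I + 1) := fun v => c (.inl v)
  let φ : ZMod σ → ℕ := fun ω => #{u ∈ F1 ∪ F2 | u.1 = ω}
  have hcolours : ∀ i ≠ c (.inr 0), ∃ v, g v = i := by
    intro i hi
    obtain ⟨v | k, rfl⟩ := hsurj i
    · exact ⟨v, rfl⟩
    · fin_cases k
      exacts [absurd rfl hi, absurd hc.symm hi]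
  have hφ : ∀ ω : ZMod σ, (φ ω : ℚ)
      = a * τ + Int.fract (ω.val * (a * τ)) - Int.fract ((ω + 1).val * (a * τ)) := by
    intro ω
    have h : (φ ω : ℤ) = ⌊((ω.val : ℚ) + 1) * (a * τ)⌋ - ⌊(ω.val : ℚ) * (a * τ)⌋ := by
      convert hlayer ⟨ω.val, ω.val_lt⟩ using 3 <;> simp only [ZMod.natCast_zmod_val] <;> ring
    rw [← ZMod.floor_val_add_one_mul_sub_floor_val_mul ⟨2 * m, by push_cast; linarith⟩ ω, ← h,
      Int.cast_natCast]
  have haτ : a ≤ τ := ha1.le.trans (by exact_mod_cast hτ)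
  have haσ : 2 ≤ a * σ := by linarith [(div_le_iff₀ ha0).1 hσa]
  have hbound := card_erase_mul_add_sum_le (by omega) ha0.le ha1.le haτ haσ g (c (.inr 0))
    hcolours φ _ (fun _ => Int.fract_nonneg _) (fun _ => Int.fract_lt_one _) hφ
  have hcut := two_mul_card_le_card_cut hσ3 F1 F2 c
  have hcycle := card_cycleCut_add_sum_layerCount_mul g
  have hmin := card_filter_le_sum_min_layerCount g (F1 ∪ F2) (c (.inr 0))
  have hfast : #{u ∈ F1 | c (.inl u) ≠ c (.inr 0)} + #{u ∈ F2 | c (.inl u) ≠ c (.inr 1)}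
      + #{u ∈ F1 ∪ F2 | c (.inl u) = c (.inr 0)} = #F1 + #F2 := by
    rw [← hc, filter_union, card_union_of_disjoint (disjoint_filter_filter hdisj)]
    have h1 : #{u ∈ F1 | c (.inl u) = c (.inr 0)} + #{u ∈ F1 | c (.inl u) ≠ c (.inr 0)} = #F1 :=
      card_filter_add_card_filter_not _
    have h2 : #{u ∈ F2 | c (.inl u) = c (.inr 0)} + #{u ∈ F2 | c (.inl u) ≠ c (.inr 0)} = #F2 :=
      card_filter_add_card_filter_not _
    omega
  have hI : #(univ.erase (c (.inr 0))) = I := by simp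
  rw [hI] at hbound
  have hcutQ := (Nat.cast_le (α := ℚ)).2 hcut
  have hcycleQ := congrArg (Nat.cast (R := ℚ)) hcycle
  have hfastQ := congrArg (Nat.cast (R := ℚ)) hfast
  have hminQ := (Nat.cast_le (α := ℚ)).2 hmin
  push_cast at hcutQ hcycleQ hfastQ hminQ hbound
  linarith

/-- Proposition 1: for any partition of the vertices of `G_{σ,τ,a}` into `I+1` (nonempty)
communities with `v₁, v₂` together, the number `|E^≠|` of cross-community edges (here the
count of ordered adjacent pairs with distinct communities, which is `2|E^≠|`) satisfies
`|E^≠| ≥ I(τ + a)`. -/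
theorem stmt_6 (τ σ : ℕ) [NeZero σ] (a : ℚ) (hτ : 1 ≤ τ)
    (ha0 : 0 < a) (ha1 : a < 1) (hσ3 : 3 ≤ σ) (hσa : 2 / a ≤ (σ : ℚ))
    (m : ℤ) (heven : a * σ * τ = 2 * (m : ℚ))
    (F1 F2 : Finset (ZMod σ × Fin τ)) (hdisj : Disjoint F1 F2)
    (hF1 : (F1.card : ℚ) = a * σ * τ / 2) (hF2 : (F2.card : ℚ) = a * σ * τ / 2)
    (hlayer : ∀ ω : Fin σ, (((F1 ∪ F2).filter (fun v => v.1 = (ω : ZMod σ))).card : ℤ)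
        = ⌊a * ((ω : ℚ) + 1) * τ⌋ - ⌊a * (ω : ℚ) * τ⌋)
    (I : ℕ) (hI1 : 1 ≤ I) (hIστ : I ≤ σ * τ)
    (c : FVert σ τ → Fin (I + 1)) (hsurj : Function.Surjective c)
    (hc : c (Sum.inr 0) = c (Sum.inr 1)) :
    2 * (I : ℚ) * (τ + a) ≤
      ((Finset.univ.filter (fun p : FVert σ τ × FVert σ τ =>
        (fastenedBlowup F1 F2).Adj p.1 p.2 ∧ c p.1 ≠ c p.2)).card : ℚ) :=
  stmt_6_general τ σ a hτ ha0 ha1 hσ3 hσa m heven F1 F2 hdisj hF1 hF2 hlayer I c hsurj hc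
end

section
/- Let G = (V,E) be a connected graph and let two injections π⁽¹⁾, π⁽²⁾ of V into [n] have overlapping ranges with |range(π⁽¹⁾) ∩ range(π⁽²⁾)| = m ≥ 1. Let E_Δ⁽¹⁾ be the set of edges of π⁽¹⁾(G) that are not edges of π⁽²⁾(G). Then every connected component of the graph (π⁽¹⁾(V), E_Δ⁽¹⁾) contains at least one vertex of range(π⁽¹⁾) ∩ range(π⁽²⁾). -/
/-- Let `G` be a connected graph and `π⁽¹⁾, π⁽²⁾` injections of `V` into `Fin n` with
`m ≥ 1` common range points. Let `E_Δ⁽¹⁾` be the edges of `π⁽¹⁾(G)` that are not edges of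
`π⁽²⁾(G)`. Then every connected component of `(π⁽¹⁾(V), E_Δ⁽¹⁾)` contains a vertex of
`range π⁽¹⁾ ∩ range π⁽²⁾`; equivalently, every vertex of `range π⁽¹⁾` is linked within
`E_Δ⁽¹⁾` to some vertex of the intersection of the ranges. -/
theorem stmt_8 {V : Type*} (G : SimpleGraph V) (hG : G.Connected)
    (n : ℕ) (π1 π2 : V → Fin n)
    (h1 : Function.Injective π1) (h2 : Function.Injective π2)
    (m : ℕ) (hm : 1 ≤ m) (hcard : (Set.range π1 ∩ Set.range π2).ncard = m) :
    ∀ x ∈ Set.range π1, ∃ y ∈ Set.range π1 ∩ Set.range π2,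
      (SimpleGraph.fromRel (fun p q =>
        (∃ u v, G.Adj u v ∧ π1 u = p ∧ π1 v = q) ∧
        ¬ ∃ u v, G.Adj u v ∧ π2 u = p ∧ π2 v = q)).Reachable x y := by
  intro x hx
  obtain ⟨a, rfl⟩ := hx
  have hne : (Set.range π1 ∩ Set.range π2).Nonempty := by
    apply Set.nonempty_of_ncard_ne_zero; omega
  obtain ⟨w, hw1, hw2⟩ := hne
  obtain ⟨b, rfl⟩ := hw1
  obtain ⟨p⟩ := hG.preconnected a b
  induction p with
  | @nil b => exact ⟨π1 b, ⟨⟨b, rfl⟩, hw2⟩, SimpleGraph.Reachable.refl _⟩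
  | @cons a d b hadj q ih =>
    by_cases hπ2 : ∃ u v, G.Adj u v ∧ π2 u = π1 a ∧ π2 v = π1 d
    · obtain ⟨u, v, huv, hu, hv⟩ := hπ2
      exact ⟨π1 a, ⟨⟨a, rfl⟩, ⟨u, hu⟩⟩, SimpleGraph.Reachable.refl _⟩
    · obtain ⟨y, hy, hr⟩ := ih hw2
      refine ⟨y, hy, SimpleGraph.Reachable.trans (SimpleGraph.Adj.reachable ?_) hr⟩
      refine ⟨h1.ne hadj.ne, Or.inl ⟨⟨a, d, hadj, rfl, rfl⟩, hπ2⟩⟩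
end

section
/- For the blow-up graph with fasteners G_{σ,τ,a} = (V,E) and any two injective labelings π⁽¹⁾, π⁽²⁾ : V → [n] with π⁽¹⁾(v₁) = π⁽²⁾(v₁), π⁽¹⁾(v₂) = π⁽²⁾(v₂), and |range(π⁽¹⁾) ∩ range(π⁽²⁾)| = 2 + u, the number of common edges |E_∩| = |π⁽¹⁾(E) ∩ π⁽²⁾(E)| satisfies |E_∩| ≤ (τ + a)u. -/
namespace Stmt9Aux
open Finset
lemma zsum {σ : ℕ} [NeZero σ] {M : Type*} [AddCommMonoid M] (g : ZMod σ → M) :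
    ∑ ω : ZMod σ, g ω = ∑ i ∈ range σ, g (i : ZMod σ) := by
  rw [← Fin.sum_univ_eq_sum_range]
  have hb : Function.Bijective (fun i : Fin σ => ((i : ℕ) : ZMod σ)) := by
    constructor
    · intro i j h
      have h2 : (((i:ℕ) : ZMod σ)).val = (((j:ℕ) : ZMod σ)).val := congrArg ZMod.val h
      rw [ZMod.val_natCast_of_lt i.2, ZMod.val_natCast_of_lt j.2] at h2
      exact Fin.ext h2
    · intro ω
      exact ⟨⟨ω.val, ZMod.val_lt ω⟩, ZMod.natCast_zmod_val ω⟩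
  exact (Fintype.sum_bijective _ hb _ _ (fun i => rfl)).symm

lemma sum_shift_one (g : ℕ → ℚ) (σ : ℕ) (hg : g σ = g 0) :
    ∑ i ∈ range σ, g (i+1) = ∑ i ∈ range σ, g i := by
  have h1 := Finset.sum_range_succ' g σ
  have h2 := Finset.sum_range_succ g σ
  rw [h2] at h1
  rw [hg] at h1
  linarith

lemma sum_rot (g : ℕ → ℚ) (σ k : ℕ) (hg : ∀ i, g (i+σ) = g i) :
    ∑ i ∈ range σ, g (i+k) = ∑ i ∈ range σ, g i := by
  induction k with
  | zero => simp
  | succ k ih =>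
    have : ∀ i ∈ range σ, g (i + (k+1)) = (fun j => g (j + k)) (i+1) := by
      intro i _; simp only []; ring_nf
    rw [Finset.sum_congr rfl this, sum_shift_one (fun j => g (j+k)) σ (by simpa [Nat.add_comm] using hg k)]
    exact ih

lemma linear_core (σ τ : ℕ) (a : ℚ) (hτ : 1 ≤ τ) (ha0 : 0 < a) (ha1 : a < 1)
    (w f : ℕ → ℕ) (θ : ℕ → ℚ)
    (hw : ∀ i, w i ≤ τ) (hfw : ∀ i, f i ≤ w i)
    (hθ0 : ∀ i, 0 ≤ θ i) (hθ1 : ∀ i, θ i < 1)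
    (hfF : ∀ i, (f i : ℚ) ≤ a*τ + θ i - θ (i+1))
    (hσ : 1 ≤ σ) (hlast : w (σ-1) = 0) :
    ∑ i ∈ range σ, ((w i : ℚ) * (w (i+1)) + f i) ≤ (τ+a) * ∑ i ∈ range σ, (w i : ℚ) := by
  set S : ℕ → ℚ := fun t => ∑ i ∈ range t, ((w i : ℚ) * (w (i+1)) + f i - (τ+a) * w i) with hS
  have key : ∀ t, S t ≤ 0 ∨
      (1 ≤ t ∧ 1 ≤ w (t-1) ∧ S t + (w (t-1) : ℚ) * (τ - w t) ≤ a*(τ-1) + 1 - θ t) := by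
    intro t
    induction t with
    | zero => left; simp [hS]
    | succ t ih =>
      have hSucc : S (t+1) = S t + ((w t : ℚ) * (w (t+1)) + f t - (τ+a) * w t) := by
        simp [hS, Finset.sum_range_succ]; ring
      have hwt1 : ((w (t+1) : ℚ)) ≤ τ := by exact_mod_cast hw (t+1)
      have hwt : ((w t : ℚ)) ≤ τ := by exact_mod_cast hw t
      by_cases h0 : w t = 0
      · -- w t = 0
        left
        have hf0 : f t = 0 := Nat.le_zero.mp (h0 ▸ hfw t)
        have hsum : S (t+1) = S t := by rw [hSucc, h0, hf0]; push_cast; ring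
        rw [hsum]
        rcases ih with h | ⟨ht1, hwprev, hinv⟩
        · exact h
        · have hwp : (1:ℚ) ≤ w (t-1) := by exact_mod_cast hwprev
          have hθt := hθ0 t
          have h1 : ((w (t-1) : ℚ)) * (τ - w t) ≥ 1 * τ := by
            rw [h0]; push_cast
            have : (0:ℚ) ≤ (τ:ℚ) := by positivity
            nlinarith
          have hτ1 : (1:ℚ) ≤ (τ:ℚ) := by exact_mod_cast hτ
          nlinarith
      · -- w t ≥ 1
        right
        have hwt0 : (1:ℚ) ≤ (w t : ℚ) := by exact_mod_cast Nat.one_le_iff_ne_zero.mpr h0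
        refine ⟨Nat.le_add_left 1 t, by simpa using Nat.one_le_iff_ne_zero.mpr h0, ?_⟩
        have hA : S (t+1) + (w ((t+1)-1) : ℚ) * (τ - w (t+1)) = S t + f t - a * w t := by
          simp only [Nat.add_sub_cancel]
          rw [hSucc]; ring
        rw [hA]
        have hft := hfF t
        have hθt1 := hθ1 t
        have hθt0 := hθ0 (t+1)
        rcases ih with h | ⟨ht1, hwprev, hinv⟩
        · nlinarith [mul_le_mul_of_nonneg_left hwt0 (le_of_lt ha0)]
        · have hwp : (1:ℚ) ≤ w (t-1) := by exact_mod_cast hwprev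
          have hkey : a * ((τ:ℚ) - w t) ≤ (w (t-1) : ℚ) * (τ - w t) := by
            have h1 : (0:ℚ) ≤ (τ:ℚ) - w t := by linarith
            nlinarith
          linarith
  have hfin := key σ
  have hS0 : S σ ≤ 0 := by
    rcases hfin with h | ⟨_, hwprev, _⟩
    · exact h
    · omega
  rw [← sub_nonpos, Finset.mul_sum, ← Finset.sum_sub_distrib]
  exact hS0
lemma cyclic_core (σ τ : ℕ) (a : ℚ) (hσ : 1 ≤ σ) (hτ : 1 ≤ τ) (ha0 : 0 < a) (ha1 : a < 1)
    (w f : ℕ → ℕ) (θ : ℕ → ℚ)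
    (hwp : ∀ i, w (i+σ) = w i) (hfp : ∀ i, f (i+σ) = f i) (hθp : ∀ i, θ (i+σ) = θ i)
    (hw : ∀ i, w i ≤ τ) (hfw : ∀ i, f i ≤ w i)
    (hθ0 : ∀ i, 0 ≤ θ i) (hθ1 : ∀ i, θ i < 1)
    (hfF : ∀ i, (f i : ℚ) ≤ a*τ + θ i - θ (i+1)) :
    ∑ i ∈ range σ, ((w i : ℚ) * (w (i+1)) + f i) ≤ (τ+a) * ∑ i ∈ range σ, (w i : ℚ) := by
  by_cases hall : ∀ j < σ, 1 ≤ w j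
  · -- all layers nonempty
    have hterm : ∀ i ∈ range σ, ((w i : ℚ) * (w (i+1)) + f i) ≤
        (τ : ℚ) * w i - (τ - w (i+1)) + a*τ + (θ i - θ (i+1)) := by
      intro i hi
      have hwi : (1:ℚ) ≤ w i := by exact_mod_cast hall i (mem_range.mp hi)
      have hwi1 : ((w (i+1) : ℚ)) ≤ τ := by exact_mod_cast hw (i+1)
      have hfi := hfF i
      nlinarith [hfi]
    have hsum := Finset.sum_le_sum hterm
    have h1 : ∑ i ∈ range σ, ((τ : ℚ) * w i - (τ - w (i+1)) + a*τ + (θ i - θ (i+1)))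
        = (τ : ℚ) * ∑ i ∈ range σ, (w i : ℚ) - (σ * τ - ∑ i ∈ range σ, ((w (i+1) : ℚ)))
          + (σ * (a * τ) + (θ 0 - θ σ)) := by
      rw [Finset.sum_add_distrib, Finset.sum_add_distrib, Finset.sum_sub_distrib,
        ← Finset.mul_sum, Finset.sum_sub_distrib, Finset.sum_range_sub' θ σ,
        Finset.sum_const, Finset.sum_const, Finset.card_range, nsmul_eq_mul]
      push_cast
      ring
    have hws : w σ = w 0 := by simpa using hwp 0
    have h2 : ∑ i ∈ range σ, ((w (i+1) : ℚ)) = ∑ i ∈ range σ, ((w i : ℚ)) :=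
      sum_shift_one (fun i => ((w i : ℚ))) σ (by show ((w σ : ℚ)) = w 0; exact_mod_cast hws)
    have h3 : θ σ = θ 0 := by simpa [Nat.add_comm] using hθp 0
    have h4 : ∑ i ∈ range σ, ((w i : ℚ)) ≤ σ * τ := by
      calc ∑ i ∈ range σ, ((w i : ℚ)) ≤ ∑ i ∈ range σ, (τ:ℚ) :=
            Finset.sum_le_sum (fun i _ => by exact_mod_cast hw i)
        _ = σ * τ := by rw [Finset.sum_const, Finset.card_range, nsmul_eq_mul, mul_comm]
    rw [h1, h2, h3] at hsum
    nlinarith [hsum]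
  · push_neg at hall
    obtain ⟨j, hj, hwj⟩ := hall
    have hwj0 : w j = 0 := by omega
    set w' : ℕ → ℕ := fun i => w (i + (j+1)) with hw'
    set f' : ℕ → ℕ := fun i => f (i + (j+1)) with hf'
    set θ' : ℕ → ℚ := fun i => θ (i + (j+1)) with hθ'
    have hlast : w' (σ - 1) = 0 := by
      have : σ - 1 + (j+1) = j + σ := by omega
      simp only [hw', this, hwp j, hwj0]
    have hcon := linear_core σ τ a hτ ha0 ha1 w' f' θ'
      (fun i => hw _) (fun i => hfw _) (fun i => hθ0 _) (fun i => hθ1 _)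
      (fun i => by
        have : i + (j+1) + 1 = i + 1 + (j+1) := by omega
        simpa only [hw', hf', hθ', this] using hfF (i + (j+1)))
      hσ hlast
    have e1 : ∑ i ∈ range σ, ((w' i : ℚ) * (w' (i+1)) + f' i)
        = ∑ i ∈ range σ, ((w i : ℚ) * (w (i+1)) + f i) := by
      have := sum_rot (fun i => ((w i : ℚ) * (w (i+1)) + f i)) σ (j+1)
        (fun i => by
          have h1 : i + σ + 1 = i + 1 + σ := by omega
          simp only [h1, hwp, hfp])
      calc ∑ i ∈ range σ, ((w' i : ℚ) * (w' (i+1)) + f' i)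
          = ∑ i ∈ range σ, (fun i => ((w i : ℚ) * (w (i+1)) + f i)) (i + (j+1)) := by
            apply Finset.sum_congr rfl
            intro i _
            have : i + (j+1) + 1 = i + 1 + (j+1) := by omega
            simp only [hw', hf', this]
        _ = _ := this
    have e2 : ∑ i ∈ range σ, ((w' i : ℚ)) = ∑ i ∈ range σ, ((w i : ℚ)) := by
      exact sum_rot (fun i => ((w i : ℚ))) σ (j+1) (fun i => by simp only [hwp])
    rw [e1, e2] at hcon
    exact hcon

end Stmt9Aux

/-- Lemma (|E_∩| ≤ (τ+a)u): for two injective labelings of `G_{σ,τ,a}` into `Fin n`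
agreeing on the distinguished vertices, with range overlap `2 + u`, the number of common
edges (counted here as ordered pairs, i.e. `2|E_∩|`) is at most `2(τ+a)u`. -/
theorem stmt_9 (τ σ n : ℕ) [NeZero σ] (a : ℚ) (hτ : 1 ≤ τ)
    (ha0 : 0 < a) (ha1 : a < 1) (hσ3 : 3 ≤ σ) (hσa : 2 / a ≤ (σ : ℚ))
    (mhalf : ℤ) (heven : a * σ * τ = 2 * (mhalf : ℚ))
    (F1 F2 : Finset (ZMod σ × Fin τ)) (hdisj : Disjoint F1 F2)
    (hF1 : (F1.card : ℚ) = a * σ * τ / 2) (hF2 : (F2.card : ℚ) = a * σ * τ / 2)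
    (hlayer : ∀ ω : Fin σ, (((F1 ∪ F2).filter (fun v => v.1 = (ω : ZMod σ))).card : ℤ)
        = ⌊a * ((ω : ℚ) + 1) * τ⌋ - ⌊a * (ω : ℚ) * τ⌋)
    (π1 π2 : FVert σ τ → Fin n)
    (h1 : Function.Injective π1) (h2 : Function.Injective π2)
    (hv1 : π1 (Sum.inr 0) = π2 (Sum.inr 0)) (hv2 : π1 (Sum.inr 1) = π2 (Sum.inr 1))
    (u : ℕ)
    (hu : (Finset.image π1 Finset.univ ∩ Finset.image π2 Finset.univ).card = 2 + u) :
    ((Finset.univ.filter (fun p : Fin n × Fin n =>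
        (∃ v w, (fastenedBlowup F1 F2).Adj v w ∧ π1 v = p.1 ∧ π1 w = p.2) ∧
        (∃ v w, (fastenedBlowup F1 F2).Adj v w ∧ π2 v = p.1 ∧ π2 w = p.2))).card : ℚ)
      ≤ 2 * (τ + a) * u := by
  classical
  set S : Finset (Fin n) := Finset.image π1 Finset.univ ∩ Finset.image π2 Finset.univ with hSdef
  set W : Finset (FVert σ τ) := Finset.univ.filter (fun v => π1 v ∈ S) with hWdef
  set WL : Finset (ZMod σ × Fin τ) :=
    Finset.univ.filter (fun x => π1 (Sum.inl x) ∈ S) with hWLdef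
  set G := fastenedBlowup F1 F2 with hGdef
  set T : Finset (FVert σ τ × FVert σ τ) :=
    (W ×ˢ W).filter (fun q => G.Adj q.1 q.2) with hTdef
  -- distinguished vertices in W
  have hin : ∀ k : Fin 2, Sum.inr k ∈ W := by
    intro k
    have hk : k = 0 ∨ k = 1 := by omega
    have : π1 (Sum.inr k) ∈ S := by
      refine Finset.mem_inter.mpr ⟨Finset.mem_image.mpr ⟨_, Finset.mem_univ _, rfl⟩, ?_⟩
      rcases hk with h | h <;> subst h
      · exact Finset.mem_image.mpr ⟨_, Finset.mem_univ _, hv1.symm⟩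
      · exact Finset.mem_image.mpr ⟨_, Finset.mem_univ _, hv2.symm⟩
    simp [hWdef, this]
  -- step 1 : the filter set is dominated by T
  have step1 : (Finset.univ.filter (fun p : Fin n × Fin n =>
        (∃ v w, (fastenedBlowup F1 F2).Adj v w ∧ π1 v = p.1 ∧ π1 w = p.2) ∧
        (∃ v w, (fastenedBlowup F1 F2).Adj v w ∧ π2 v = p.1 ∧ π2 w = p.2))).card ≤ T.card := by
    refine le_trans (Finset.card_le_card ?_) (Finset.card_image_le (f := fun q : FVert σ τ × FVert σ τ => (π1 q.1, π1 q.2)))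
    intro p hp
    rw [Finset.mem_filter] at hp
    obtain ⟨-, ⟨v, w, hadj, hv, hw⟩, ⟨v', w', hadj', hv', hw'⟩⟩ := hp
    refine Finset.mem_image.mpr ⟨(v, w), ?_, by simp [hv, hw]⟩
    rw [hTdef, Finset.mem_filter, Finset.mem_product]
    refine ⟨⟨?_, ?_⟩, hadj⟩
    · simp only [hWdef, Finset.mem_filter, Finset.mem_univ, true_and]
      exact Finset.mem_inter.mpr ⟨Finset.mem_image.mpr ⟨v, Finset.mem_univ _, rfl⟩,
        Finset.mem_image.mpr ⟨v', Finset.mem_univ _, hv'.trans hv.symm⟩⟩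
    · simp only [hWdef, Finset.mem_filter, Finset.mem_univ, true_and]
      exact Finset.mem_inter.mpr ⟨Finset.mem_image.mpr ⟨w, Finset.mem_univ _, rfl⟩,
        Finset.mem_image.mpr ⟨w', Finset.mem_univ _, hw'.trans hw.symm⟩⟩
  -- layer counts
  set wz : ZMod σ → ℕ := fun ω => (WL.filter (fun x => x.1 = ω)).card with hwzdef
  set fz : ZMod σ → ℕ := fun ω => ((WL ∩ (F1 ∪ F2)).filter (fun x => x.1 = ω)).card with hfzdef
  -- auxiliary sets covering T
  set U : Finset ((ZMod σ × Fin τ) × (ZMod σ × Fin τ)) :=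
    (WL ×ˢ WL).filter (fun p => p.2.1 = p.1.1 + 1 ∨ p.1.1 = p.2.1 + 1) with hUdef
  have hmemW : ∀ v, v ∈ W ↔ π1 v ∈ S := by intro v; simp [hWdef]
  have hmemWL : ∀ x, x ∈ WL ↔ π1 (Sum.inl x) ∈ S := by intro x; simp [hWLdef]
  -- cover T
  set A := U.image (fun p => ((Sum.inl p.1 : FVert σ τ), (Sum.inl p.2 : FVert σ τ))) with hAdef
  set B := (WL ∩ F1).image (fun x => ((Sum.inl x : FVert σ τ), (Sum.inr 0 : FVert σ τ))) with hBdef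
  set C := (WL ∩ F2).image (fun x => ((Sum.inl x : FVert σ τ), (Sum.inr 1 : FVert σ τ))) with hCdef
  set D := (WL ∩ F1).image (fun x => ((Sum.inr 0 : FVert σ τ), (Sum.inl x : FVert σ τ))) with hDdef
  set E := (WL ∩ F2).image (fun x => ((Sum.inr 1 : FVert σ τ), (Sum.inl x : FVert σ τ))) with hEdef
  have hcover : T ⊆ A ∪ (B ∪ C) ∪ (D ∪ E) := by
    rintro ⟨q1, q2⟩ hq
    rw [hTdef, Finset.mem_filter, Finset.mem_product] at hq
    obtain ⟨⟨hq1, hq2⟩, hadj⟩ := hq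
    rw [hGdef, fastenedBlowup, SimpleGraph.fromRel_adj] at hadj
    obtain ⟨hne, hrel⟩ := hadj
    rcases q1 with x | k <;> rcases q2 with y | k'
    · -- inl inl
      refine Finset.mem_union_left _ (Finset.mem_union_left _ (Finset.mem_image.mpr ⟨(x, y), ?_, rfl⟩))
      rw [hUdef, Finset.mem_filter, Finset.mem_product]
      refine ⟨⟨(hmemWL x).mpr ((hmemW _).mp hq1), (hmemWL y).mpr ((hmemW _).mp hq2)⟩, ?_⟩
      simp only [fadj, decide_eq_true_eq] at hrel
      tauto
    · -- inl inr
      simp only [fadj, Bool.or_eq_true, Bool.and_eq_true, decide_eq_true_eq] at hrel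
      have hx : x ∈ WL := (hmemWL x).mpr ((hmemW _).mp hq1)
      have : (k' = 0 ∧ x ∈ F1) ∨ (k' = 1 ∧ x ∈ F2) := by tauto
      rcases this with ⟨hk, hF⟩ | ⟨hk, hF⟩ <;> subst hk
      · exact Finset.mem_union_left _ (Finset.mem_union_right _ (Finset.mem_union_left _
          (Finset.mem_image.mpr ⟨x, Finset.mem_inter.mpr ⟨hx, hF⟩, rfl⟩)))
      · exact Finset.mem_union_left _ (Finset.mem_union_right _ (Finset.mem_union_right _
          (Finset.mem_image.mpr ⟨x, Finset.mem_inter.mpr ⟨hx, hF⟩, rfl⟩)))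
    · -- inr inl
      simp only [fadj, Bool.or_eq_true, Bool.and_eq_true, decide_eq_true_eq] at hrel
      have hy : y ∈ WL := (hmemWL y).mpr ((hmemW _).mp hq2)
      have : (k = 0 ∧ y ∈ F1) ∨ (k = 1 ∧ y ∈ F2) := by tauto
      rcases this with ⟨hk, hF⟩ | ⟨hk, hF⟩ <;> subst hk
      · exact Finset.mem_union_right _ (Finset.mem_union_left _
          (Finset.mem_image.mpr ⟨y, Finset.mem_inter.mpr ⟨hy, hF⟩, rfl⟩))
      · exact Finset.mem_union_right _ (Finset.mem_union_right _
          (Finset.mem_image.mpr ⟨y, Finset.mem_inter.mpr ⟨hy, hF⟩, rfl⟩))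
    · -- inr inr
      simp only [fadj] at hrel
      tauto
  have step2 : T.card ≤ U.card + 2 * ((WL ∩ F1).card + (WL ∩ F2).card) := by
    have hc := Finset.card_le_card hcover
    have u1 := Finset.card_union_le (A ∪ (B ∪ C)) (D ∪ E)
    have u2 := Finset.card_union_le A (B ∪ C)
    have u3 := Finset.card_union_le B C
    have u4 := Finset.card_union_le D E
    have h1 : A.card ≤ U.card := hAdef ▸ Finset.card_image_le
    have h2 : B.card ≤ (WL ∩ F1).card := hBdef ▸ Finset.card_image_le
    have h3 : C.card ≤ (WL ∩ F2).card := hCdef ▸ Finset.card_image_le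
    have h4 : D.card ≤ (WL ∩ F1).card := hDdef ▸ Finset.card_image_le
    have h5 : E.card ≤ (WL ∩ F2).card := hEdef ▸ Finset.card_image_le
    omega
  -- bound U.card
  have stepU : U.card ≤ 2 * ∑ ω : ZMod σ, wz ω * wz (ω + 1) := by
    have hUeq : U = (WL ×ˢ WL).filter (fun p => p.2.1 = p.1.1 + 1)
        ∪ (WL ×ˢ WL).filter (fun p => p.1.1 = p.2.1 + 1) := by
      rw [hUdef, Finset.filter_or]
    have hplus : ((WL ×ˢ WL).filter (fun p => p.2.1 = p.1.1 + 1)).card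
        ≤ ∑ ω : ZMod σ, wz ω * wz (ω + 1) := by
      rw [Finset.card_eq_sum_card_fiberwise
        (f := fun p : (ZMod σ × Fin τ) × (ZMod σ × Fin τ) => p.1.1) (t := Finset.univ)
        (fun x _ => Finset.mem_univ _)]
      refine Finset.sum_le_sum (fun ω _ => ?_)
      have hsub : ((WL ×ˢ WL).filter (fun p => p.2.1 = p.1.1 + 1)).filter (fun p => p.1.1 = ω)
          ⊆ (WL.filter (fun x => x.1 = ω)) ×ˢ (WL.filter (fun x => x.1 = ω + 1)) := by
        rintro ⟨p1, p2⟩ hp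
        simp only [Finset.mem_filter, Finset.mem_product] at hp ⊢
        obtain ⟨⟨⟨hp1, hp2⟩, hadj⟩, hω⟩ := hp
        exact ⟨⟨hp1, hω⟩, ⟨hp2, by rw [hadj, hω]⟩⟩
      calc _ ≤ _ := Finset.card_le_card hsub
        _ = wz ω * wz (ω + 1) := by rw [Finset.card_product]
    have hminus : ((WL ×ˢ WL).filter (fun p => p.1.1 = p.2.1 + 1)).card
        ≤ ∑ ω : ZMod σ, wz ω * wz (ω + 1) := by
      rw [Finset.card_eq_sum_card_fiberwise
        (f := fun p : (ZMod σ × Fin τ) × (ZMod σ × Fin τ) => p.2.1) (t := Finset.univ)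
        (fun x _ => Finset.mem_univ _)]
      refine Finset.sum_le_sum (fun ω _ => ?_)
      have hsub : ((WL ×ˢ WL).filter (fun p => p.1.1 = p.2.1 + 1)).filter (fun p => p.2.1 = ω)
          ⊆ (WL.filter (fun x => x.1 = ω + 1)) ×ˢ (WL.filter (fun x => x.1 = ω)) := by
        rintro ⟨p1, p2⟩ hp
        simp only [Finset.mem_filter, Finset.mem_product] at hp ⊢
        obtain ⟨⟨⟨hp1, hp2⟩, hadj⟩, hω⟩ := hp
        exact ⟨⟨hp1, by rw [hadj, hω]⟩, ⟨hp2, hω⟩⟩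
      calc _ ≤ _ := Finset.card_le_card hsub
        _ = wz (ω + 1) * wz ω := by rw [Finset.card_product]
        _ = wz ω * wz (ω + 1) := Nat.mul_comm _ _
    calc U.card ≤ _ := hUeq ▸ Finset.card_union_le _ _
      _ ≤ 2 * ∑ ω : ZMod σ, wz ω * wz (ω + 1) := by omega
  -- fastener split
  have hsplit : (WL ∩ F1).card + (WL ∩ F2).card = (WL ∩ (F1 ∪ F2)).card := by
    rw [Finset.inter_union_distrib_left,
      Finset.card_union_of_disjoint (hdisj.mono Finset.inter_subset_right Finset.inter_subset_right)]
  have hfsum : (WL ∩ (F1 ∪ F2)).card = ∑ ω : ZMod σ, fz ω :=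
    Finset.card_eq_sum_card_fiberwise (f := fun x : ZMod σ × Fin τ => x.1) (t := Finset.univ)
      (fun x _ => Finset.mem_univ _)
  have hwsum : WL.card = ∑ ω : ZMod σ, wz ω :=
    Finset.card_eq_sum_card_fiberwise (f := fun x : ZMod σ × Fin τ => x.1) (t := Finset.univ)
      (fun x _ => Finset.mem_univ _)
  -- W.card = 2 + u  and  WL.card = u
  have hWcard : W.card = 2 + u := by
    have himg : W.image π1 = S := by
      ext s
      simp only [Finset.mem_image]
      constructor
      · rintro ⟨v, hv, rfl⟩
        exact (hmemW v).mp hv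
      · intro hs
        obtain ⟨v, -, rfl⟩ := Finset.mem_image.mp (Finset.mem_of_mem_inter_left hs)
        exact ⟨v, (hmemW v).mpr hs, rfl⟩
    rw [← hu, ← himg, Finset.card_image_of_injective _ h1]
  have hWLu : WL.card = u := by
    have hWsplit : W = WL.image Sum.inl ∪ {Sum.inr 0, Sum.inr 1} := by
      ext v
      rcases v with x | k
      · simp only [Finset.mem_union, Finset.mem_image, Finset.mem_insert, Finset.mem_singleton]
        constructor
        · intro h
          exact Or.inl ⟨x, (hmemWL x).mpr ((hmemW _).mp h), rfl⟩
        · rintro (⟨y, hy, hxy⟩ | h)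
          · obtain rfl : y = x := Sum.inl_injective hxy
            exact (hmemW _).mpr ((hmemWL _).mp hy)
          · rcases h with h | h <;> exact absurd h (by simp)
      · have hk : k = 0 ∨ k = 1 := by omega
        have h2 : (Sum.inr k : FVert σ τ) ∈ WL.image Sum.inl ∪ {Sum.inr 0, Sum.inr 1} := by
          rcases hk with rfl | rfl <;> simp
        simp only [hin k, h2]
    have hd : Disjoint (WL.image Sum.inl) ({Sum.inr 0, Sum.inr 1} : Finset (FVert σ τ)) := by
      rw [Finset.disjoint_left]
      rintro v hv
      obtain ⟨y, -, rfl⟩ := Finset.mem_image.mp hv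
      simp
    have hcard2 : ({Sum.inr 0, Sum.inr 1} : Finset (FVert σ τ)).card = 2 := by
      rw [Finset.card_insert_of_notMem (by simp), Finset.card_singleton]
    have := hWcard
    rw [hWsplit, Finset.card_union_of_disjoint hd, Finset.card_image_of_injective _ Sum.inl_injective,
      hcard2] at this
    omega
  -- pass to ℕ-indexed sequences
  set w : ℕ → ℕ := fun i => wz ((i : ℕ) : ZMod σ) with hwdef
  set f : ℕ → ℕ := fun i => fz ((i : ℕ) : ZMod σ) with hfdef
  set θ : ℕ → ℚ := fun i => Int.fract (a * ((i % σ : ℕ) : ℚ) * τ) with hθdef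
  have hσpos : 0 < σ := by omega
  have hcastp : ∀ i : ℕ, ((i + σ : ℕ) : ZMod σ) = ((i : ℕ) : ZMod σ) := by
    intro i; push_cast [ZMod.natCast_self]; ring
  have hwp : ∀ i, w (i + σ) = w i := fun i => by simp only [hwdef, hcastp]
  have hfp : ∀ i, f (i + σ) = f i := fun i => by simp only [hfdef, hcastp]
  have hθp : ∀ i, θ (i + σ) = θ i := fun i => by simp only [hθdef, Nat.add_mod_right]
  have hlayercard : ∀ ω : ZMod σ,
      (Finset.univ.filter (fun x : ZMod σ × Fin τ => x.1 = ω)).card = τ := by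
    intro ω
    have him : Finset.univ.filter (fun x : ZMod σ × Fin τ => x.1 = ω)
        = (Finset.univ : Finset (Fin τ)).image (fun t => (ω, t)) := by
      ext ⟨x1, x2⟩
      simp [Prod.ext_iff, eq_comm]
    rw [him, Finset.card_image_of_injective _ (fun s t h => ((Prod.mk.injEq _ _ _ _).mp h).2),
      Finset.card_univ, Fintype.card_fin]
  have hwτ : ∀ i, w i ≤ τ := by
    intro i
    rw [← hlayercard ((i : ℕ) : ZMod σ)]
    exact Finset.card_le_card (Finset.filter_subset_filter _ (Finset.subset_univ WL))
  have hfwz : ∀ i, f i ≤ w i := by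
    intro i
    exact Finset.card_le_card (Finset.filter_subset_filter _ Finset.inter_subset_left)
  have hθ0 : ∀ i, 0 ≤ θ i := fun i => Int.fract_nonneg _
  have hθ1 : ∀ i, θ i < 1 := fun i => Int.fract_lt_one _
  have hfF : ∀ i, (f i : ℚ) ≤ a * τ + θ i - θ (i + 1) := by
    intro i
    set r := i % σ with hr
    have hrlt : r < σ := Nat.mod_lt _ hσpos
    have hir : ((i : ℕ) : ZMod σ) = ((r : ℕ) : ZMod σ) := by
      rw [hr]; exact (ZMod.natCast_mod i σ).symm
    have hfle : (f i : ℚ) ≤ (((F1 ∪ F2).filter (fun v => v.1 = ((r : ℕ) : ZMod σ))).card : ℚ) := by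
      have he : f i = fz ((r : ℕ) : ZMod σ) := by rw [hfdef]; simp only [hir]
      rw [he]
      exact_mod_cast Nat.cast_le.mpr (Finset.card_le_card
        (Finset.filter_subset_filter _ Finset.inter_subset_right))
    have hl : ((((F1 ∪ F2).filter (fun v => v.1 = ((r : ℕ) : ZMod σ))).card : ℤ))
        = ⌊a * ((r : ℚ) + 1) * τ⌋ - ⌊a * (r : ℚ) * τ⌋ := hlayer ⟨r, hrlt⟩
    have hlQ : ((((F1 ∪ F2).filter (fun v => v.1 = ((r : ℕ) : ZMod σ))).card : ℚ))
        = ((⌊a * ((r : ℚ) + 1) * τ⌋ : ℤ) : ℚ) - ((⌊a * (r : ℚ) * τ⌋ : ℤ) : ℚ) := by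
      exact_mod_cast hl
    have hθi : θ i = a * (r : ℚ) * τ - ((⌊a * (r : ℚ) * τ⌋ : ℤ) : ℚ) := by
      rw [hθdef]; simp only [← hr]; exact (Int.self_sub_floor _).symm
    by_cases hc : r + 1 < σ
    · have h1 : (i + 1) % σ = r + 1 := by
        rw [Nat.add_mod, ← hr, Nat.mod_eq_of_lt (show 1 < σ by omega), Nat.mod_eq_of_lt hc]
      have hθi1 : θ (i + 1) = a * ((r : ℚ) + 1) * τ - ((⌊a * ((r : ℚ) + 1) * τ⌋ : ℤ) : ℚ) := by
        rw [hθdef]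
        simp only [h1]
        push_cast
        exact (Int.self_sub_floor _).symm
      rw [hθi, hθi1]
      calc (f i : ℚ) ≤ _ := hfle
        _ = _ := hlQ
        _ ≤ _ := by ring_nf; exact le_refl _
    · have hrσ : r + 1 = σ := by omega
      have h1 : (i + 1) % σ = 0 := by
        rw [Nat.add_mod, ← hr, Nat.mod_eq_of_lt (show 1 < σ by omega), hrσ, Nat.mod_self]
      have hθi1 : θ (i + 1) = 0 := by
        rw [hθdef]; simp [h1]
      have hfl := Int.floor_le (a * ((r : ℚ) + 1) * τ)
      rw [hθi, hθi1]
      have : a * ((r : ℚ) + 1) * τ = a * τ + a * (r : ℚ) * τ := by ring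
      linarith [hfle.trans_eq hlQ]
  -- apply the core inequality
  have hcore := Stmt9Aux.cyclic_core σ τ a (by omega) hτ ha0 ha1 w f θ hwp hfp hθp hwτ hfwz hθ0 hθ1 hfF
  -- translate sums
  have hz1 : ∑ ω : ZMod σ, ((wz ω * wz (ω + 1) + fz ω : ℕ) : ℚ)
      = ∑ i ∈ Finset.range σ, ((w i : ℚ) * (w (i + 1)) + f i) := by
    rw [Stmt9Aux.zsum (fun ω => ((wz ω * wz (ω + 1) + fz ω : ℕ) : ℚ))]
    refine Finset.sum_congr rfl (fun i _ => ?_)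
    have hsucc : (((i + 1 : ℕ)) : ZMod σ) = ((i : ℕ) : ZMod σ) + 1 := by push_cast; ring
    rw [hwdef, hfdef]
    simp only [hsucc]
    push_cast
    ring
  have hz2 : ∑ ω : ZMod σ, ((wz ω : ℚ)) = ∑ i ∈ Finset.range σ, ((w i : ℚ)) :=
    Stmt9Aux.zsum (fun ω => ((wz ω : ℚ)))
  have husum : ∑ i ∈ Finset.range σ, ((w i : ℚ)) = (u : ℚ) := by
    rw [← hz2, ← hWLu, hwsum]
    push_cast
    rfl
  -- combine everything
  have hNat : (Finset.univ.filter (fun p : Fin n × Fin n =>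
        (∃ v w, (fastenedBlowup F1 F2).Adj v w ∧ π1 v = p.1 ∧ π1 w = p.2) ∧
        (∃ v w, (fastenedBlowup F1 F2).Adj v w ∧ π2 v = p.1 ∧ π2 w = p.2))).card
      ≤ 2 * (∑ ω : ZMod σ, (wz ω * wz (ω + 1) + fz ω)) := by
    have e1 : ∑ ω : ZMod σ, (wz ω * wz (ω + 1) + fz ω)
        = ∑ ω : ZMod σ, wz ω * wz (ω + 1) + ∑ ω : ZMod σ, fz ω := Finset.sum_add_distrib
    omega
  calc ((Finset.univ.filter (fun p : Fin n × Fin n =>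
        (∃ v w, (fastenedBlowup F1 F2).Adj v w ∧ π1 v = p.1 ∧ π1 w = p.2) ∧
        (∃ v w, (fastenedBlowup F1 F2).Adj v w ∧ π2 v = p.1 ∧ π2 w = p.2))).card : ℚ)
      ≤ 2 * (∑ ω : ZMod σ, ((wz ω * wz (ω + 1) + fz ω : ℕ) : ℚ)) := by
        push_cast at hNat ⊢
        exact_mod_cast hNat
    _ = 2 * ∑ i ∈ Finset.range σ, ((w i : ℚ) * (w (i + 1)) + f i) := by rw [hz1]
    _ ≤ 2 * ((τ + a) * ∑ i ∈ Finset.range σ, ((w i : ℚ))) := by linarith [hcore]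
    _ = 2 * (τ + a) * u := by rw [husum]; ring
end

section
/- Let z₁,…,z_n be i.i.d. uniform on {1,…,K}, let H be a graph on vertex set V ⊆ [n] with 1, 2 ∈ V whose components not containing 1 or 2 number cc ≥ 1, and let A be the event that every edge of H is monochromatic and z₁ = z₂. On A, the number ℓ(z) of distinct labels appearing on V satisfies ℓ(z) − 1 ∈ {0, 1, …, cc}, and for every integer x ∈ {0,…,cc}, P(ℓ(z) − 1 = x | A) ≤ cc^{cc} · K^{−(cc − x)}. -/
open scoped ProbabilityTheory

instance (K : ℕ) [NeZero K] : Nonempty (Fin K) :=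
  ⟨⟨0, Nat.pos_of_ne_zero (NeZero.ne K)⟩⟩

/-!
Recolouring the components of `H` that avoid `v1` and `v2` maps the event `A` to itself, so
conditionally on `A` the labels of these `cc` components are i.i.d. uniform and independent of the
common label `c` of `v1` and `v2`. Hence `P(ℓ(z) - 1 = x | A)` is the probability that `cc` uniform
labels use exactly `x` values other than `c`. Such labellings are obtained by choosing those `x`
values and then one of `x + 1` values per component, so there are at most
`C(K, x) (x + 1)^cc ≤ K^x cc^cc` of them (for `x < cc`) among `K^cc`; for `x = cc` the bound is
at least `1`.
-/

open Finset

/-- The map `(z, w) ↦ (set z w, get z)` is an involution exchanging the two sides. -/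
theorem Finset.card_filter_mul_card_eq_sum_of_lens {Ω W : Type*} [DecidableEq Ω] [Fintype W]
    (A : Finset Ω) (get : Ω → W) (set : Ω → W → Ω) (Q : Ω → W → Prop)
    [∀ z, DecidablePred (Q z)]
    (get_set : ∀ z w, get (set z w) = w) (set_set : ∀ z w w', set (set z w) w' = set z w')
    (set_get : ∀ z ∈ A, set z (get z) = z) (set_mem : ∀ z ∈ A, ∀ w, set z w ∈ A)
    (Q_set : ∀ z w, Q (set z w) = Q z) :
    #{z ∈ A | Q z (get z)} * Fintype.card W = ∑ z ∈ A, #{w | Q z w} := by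
  rw [← card_univ, ← card_product, ← card_sigma]
  refine card_nbij' (fun p => ⟨set p.1 p.2, get p.1⟩) (fun q => (set q.1 q.2, get q.1))
    ?_ ?_ ?_ ?_ <;>
  simp only [Set.MapsTo, Set.LeftInvOn, mem_coe, mem_product, mem_sigma, mem_filter,
    mem_univ, and_true, true_and, Prod.forall, Sigma.forall, Q_set, get_set, set_set]
  · exact fun z w hz => ⟨set_mem z hz.1 w, hz.2⟩
  · exact fun z u hz => ⟨set_mem z hz.1 u, hz.2⟩
  · exact fun z w hz => by rw [set_get z hz.1]
  · exact fun z u hz => by rw [set_get z hz.1]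

theorem Finset.card_filter_card_image_erase_le {ι β : Type*} [Fintype ι] [DecidableEq ι]
    [Fintype β] [DecidableEq β] (c : β) (x : ℕ) :
    #{u : ι → β | #((univ.image u).erase c) = x} ≤
      (Fintype.card β).choose x * (x + 1) ^ Fintype.card ι := by
  have hsub : ({u : ι → β | #((univ.image u).erase c) = x} : Finset _) ⊆
      (powersetCard x univ).biUnion fun D => Fintype.piFinset fun _ => insert c D := by
    intro u hu
    refine mem_biUnion.2 ⟨_, mem_powersetCard.2 ⟨subset_univ _, (mem_filter.1 hu).2⟩, ?_⟩
    exact Fintype.mem_piFinset.2 fun i => mem_insert.2 <| (eq_or_ne (u i) c).imp_right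
      fun h => mem_erase.2 ⟨h, mem_image_of_mem u (mem_univ i)⟩
  calc _ ≤ _ := card_le_card hsub
    _ ≤ ∑ D ∈ powersetCard x (univ : Finset β), #(Fintype.piFinset fun _ : ι => insert c D) :=
        card_biUnion_le
    _ ≤ ∑ D ∈ powersetCard x (univ : Finset β), (x + 1) ^ Fintype.card ι := by
        gcongr with D hD
        rw [Fintype.card_piFinset, prod_const, card_univ]
        gcongr
        exact (card_insert_le _ _).trans (by rw [(mem_powersetCard.1 hD).2])
    _ = _ := by rw [sum_const, card_powersetCard, card_univ, smul_eq_mul]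

namespace SimpleGraph

variable {α β : Type*}

theorem Reachable.apply_eq_of_adj {G : SimpleGraph α} {f : α → β}
    (hf : ∀ x y, G.Adj x y → f x = f y) {u v : α} (h : G.Reachable u v) : f u = f v := by
  obtain ⟨p⟩ := h
  induction p with
  | nil => rfl
  | cons ha _ ih => exact (hf _ _ ha).trans ih

section Recolor

variable {H : SimpleGraph α} {V : Set α} (S : Set (H.induce V).ConnectedComponent)

open Classical in
noncomputable def recolorComponents (z : α → β) (w : S → β) (u : α) : β :=
  if hu : u ∈ V then
    if hC : (H.induce V).connectedComponentMk ⟨u, hu⟩ ∈ S then w ⟨_, hC⟩ else z u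
  else z u

-- Depends on the representative `C.out` unless `z` is constant along edges.
noncomputable def componentLabels (z : α → β) (C : S) : β := z C.1.out

variable {S}

theorem recolorComponents_of_mem (z : α → β) (w : S → β) {u : α} (hu : u ∈ V)
    (hC : (H.induce V).connectedComponentMk ⟨u, hu⟩ ∈ S) :
    recolorComponents S z w u = w ⟨_, hC⟩ := by
  rw [recolorComponents, dif_pos hu, dif_pos hC]

theorem recolorComponents_of_notMem (z : α → β) (w : S → β) {u : α}
    (h : ∀ hu : u ∈ V, (H.induce V).connectedComponentMk ⟨u, hu⟩ ∉ S) :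
    recolorComponents S z w u = z u := by
  unfold recolorComponents
  split_ifs with hu hC
  exacts [absurd hC (h hu), rfl, rfl]

theorem recolorComponents_eq_of_mem_supp (z : α → β) (w : S → β)
    {C : (H.induce V).ConnectedComponent} (hC : C ∉ S) {u : V} (hu : u ∈ C.supp) :
    recolorComponents S z w u = z u :=
  recolorComponents_of_notMem z w fun _ h => hC (hu ▸ h)

theorem componentLabels_recolorComponents (z : α → β) (w : S → β) :
    componentLabels S (recolorComponents S z w) = w := by
  funext C
  have hout : (H.induce V).connectedComponentMk C.1.out = C := C.1.out_eq
  have hC : (H.induce V).connectedComponentMk C.1.out ∈ S := hout.symm ▸ C.2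
  rw [componentLabels, recolorComponents_of_mem z w C.1.out.2 hC]
  exact congrArg w (Subtype.ext hout)

theorem recolorComponents_recolorComponents (z : α → β) (w w' : S → β) :
    recolorComponents S (recolorComponents S z w) w' = recolorComponents S z w' := by
  funext u
  unfold recolorComponents
  split_ifs <;> rfl

theorem apply_eq_of_reachable_induce {z : α → β} (hz : ∀ x y, H.Adj x y → z x = z y) {u v : V}
    (h : (H.induce V).Reachable u v) : z u = z v :=
  h.apply_eq_of_adj (f := fun u : V => z u) fun x y hxy => hz x y hxy

theorem componentLabels_mk {z : α → β} (hz : ∀ x y, H.Adj x y → z x = z y) {u : V}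
    (hu : (H.induce V).connectedComponentMk u ∈ S) : componentLabels S z ⟨_, hu⟩ = z u :=
  apply_eq_of_reachable_induce hz (ConnectedComponent.exact (Quot.out_eq _))

theorem recolorComponents_componentLabels {z : α → β} (hz : ∀ x y, H.Adj x y → z x = z y) :
    recolorComponents S z (componentLabels S z) = z := by
  funext u
  unfold recolorComponents
  split_ifs with hu hC
  exacts [componentLabels_mk hz hC, rfl, rfl]

theorem recolorComponents_eq_of_adj (hV : ∀ x y, H.Adj x y → x ∈ V ∧ y ∈ V) {z : α → β}
    (hz : ∀ x y, H.Adj x y → z x = z y) (w : S → β) :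
    ∀ x y, H.Adj x y → recolorComponents S z w x = recolorComponents S z w y := by
  intro x y hxy
  obtain ⟨hx, hy⟩ := hV x y hxy
  have hxy' : (H.induce V).connectedComponentMk ⟨x, hx⟩ =
      (H.induce V).connectedComponentMk ⟨y, hy⟩ :=
    ConnectedComponent.sound (Adj.reachable (G := H.induce V) hxy)
  unfold recolorComponents
  rw [dif_pos hx, dif_pos hy]
  split_ifs with hCx hCy hCy
  · congr 2
  · exact absurd (hxy' ▸ hCx) hCy
  · exact absurd (hxy' ▸ hCy) hCx
  · exact hz x y hxy

end Recolor

section Avoiding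

variable {H : SimpleGraph α} {V : Finset α} (u₁ u₂ : (V : Set α))

variable (H) in
def componentsAvoiding : Set (H.induce (V : Set α)).ConnectedComponent :=
  {C | u₁ ∉ C.supp ∧ u₂ ∉ C.supp}

variable (H β) in
open Classical in
noncomputable def edgeConstantLabelings [Fintype α] [DecidableEq α] [Fintype β] (v₁ v₂ : α) :
    Finset (α → β) :=
  {z | (∀ x y, H.Adj x y → z x = z y) ∧ z v₁ = z v₂}

variable {u₁ u₂}

theorem recolorComponents_apply_left (z : α → β) (w : componentsAvoiding H u₁ u₂ → β) :
    recolorComponents _ z w u₁ = z u₁ :=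
  recolorComponents_eq_of_mem_supp z w (fun h => h.1 rfl) rfl

theorem recolorComponents_apply_right (z : α → β) (w : componentsAvoiding H u₁ u₂ → β) :
    recolorComponents _ z w u₂ = z u₂ :=
  recolorComponents_eq_of_mem_supp z w (fun h => h.2 rfl) rfl

theorem image_eq_insert_image_componentLabels [DecidableEq β]
    [Fintype (componentsAvoiding H u₁ u₂)] {z : α → β} (hz : ∀ x y, H.Adj x y → z x = z y)
    (h₁₂ : z u₁ = z u₂) :
    V.image z = insert (z u₁) (univ.image (componentLabels (componentsAvoiding H u₁ u₂) z)) := by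
  ext b
  simp only [mem_image, mem_insert, mem_univ, true_and]
  constructor
  · rintro ⟨u, hu, rfl⟩
    by_cases hC : (H.induce V).connectedComponentMk ⟨u, hu⟩ ∈ componentsAvoiding H u₁ u₂
    · exact Or.inr ⟨⟨_, hC⟩, componentLabels_mk hz hC⟩
    · simp only [componentsAvoiding, Set.mem_ofPred_eq, not_and_or, not_not,
        ConnectedComponent.mem_supp_iff] at hC
      refine Or.inl ?_
      rcases hC with h | h
      · exact apply_eq_of_reachable_induce hz (ConnectedComponent.exact h.symm)
      · exact (apply_eq_of_reachable_induce hz (ConnectedComponent.exact h.symm)).trans h₁₂.symm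
  · rintro (rfl | ⟨C, rfl⟩)
    · exact ⟨u₁, u₁.2, rfl⟩
    · exact ⟨C.1.out, C.1.out.2, rfl⟩

theorem card_image_sub_one_eq [DecidableEq β] [Fintype (componentsAvoiding H u₁ u₂)]
    {z : α → β} (hz : ∀ x y, H.Adj x y → z x = z y) (h₁₂ : z u₁ = z u₂) :
    #(V.image z) - 1 =
      #((univ.image (componentLabels (componentsAvoiding H u₁ u₂) z)).erase (z u₁)) := by
  rw [image_eq_insert_image_componentLabels hz h₁₂, card_insert_eq_ite]
  split_ifs with h
  · rw [card_erase_of_mem h]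
  · rw [erase_eq_of_notMem h, Nat.add_sub_cancel]

theorem card_filter_card_image_sub_one_mul_le [Fintype α] [DecidableEq α] [Fintype β]
    [DecidableEq β] [Fintype (componentsAvoiding H u₁ u₂)]
    (hV : ∀ x y, H.Adj x y → x ∈ V ∧ y ∈ V) (x : ℕ) :
    #{z ∈ H.edgeConstantLabelings β u₁ u₂ | #(V.image z) - 1 = x} *
        Fintype.card β ^ Fintype.card (componentsAvoiding H u₁ u₂) ≤
      #(H.edgeConstantLabelings β u₁ u₂) *
        ((Fintype.card β).choose x * (x + 1) ^ Fintype.card (componentsAvoiding H u₁ u₂)) := by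
  classical
  let S := H.componentsAvoiding u₁ u₂
  let A := H.edgeConstantLabelings β u₁ u₂
  have hA : ∀ z, z ∈ A ↔ (∀ x y, H.Adj x y → z x = z y) ∧ z u₁ = z u₂ := by
    simp [A, edgeConstantLabelings]
  have hfilter : ({z ∈ A | #(V.image z) - 1 = x} : Finset _) =
      {z ∈ A | #((univ.image (componentLabels S z)).erase (z u₁)) = x} :=
    filter_congr fun z hz => by rw [card_image_sub_one_eq ((hA z).1 hz).1 ((hA z).1 hz).2]
  rw [hfilter, ← Fintype.card_fun, card_filter_mul_card_eq_sum_of_lens A (componentLabels S)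
    (recolorComponents S) (fun z w => #((univ.image w).erase (z u₁)) = x)
    componentLabels_recolorComponents recolorComponents_recolorComponents
    (fun z hz => recolorComponents_componentLabels ((hA z).1 hz).1) ?_
    (fun z w => by simp only [S, recolorComponents_apply_left])]
  · exact sum_le_card_nsmul _ _ _ fun z _ => card_filter_card_image_erase_le _ _
  · intro z hz w
    obtain ⟨hz, h₁₂⟩ := (hA z).1 hz
    refine (hA _).2 ⟨recolorComponents_eq_of_adj hV hz w, ?_⟩
    rw [recolorComponents_apply_left, recolorComponents_apply_right, h₁₂]

theorem card_filter_card_image_sub_one_mul_pow_le [Fintype α] [DecidableEq α] [Fintype β]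
    [Nonempty β] [DecidableEq β] [Fintype (componentsAvoiding H u₁ u₂)]
    (hV : ∀ x y, H.Adj x y → x ∈ V ∧ y ∈ V) {x : ℕ}
    (hx : x ≤ Fintype.card (componentsAvoiding H u₁ u₂)) :
    #{z ∈ H.edgeConstantLabelings β u₁ u₂ | #(V.image z) - 1 = x} *
        Fintype.card β ^ (Fintype.card (componentsAvoiding H u₁ u₂) - x) ≤
      Fintype.card (componentsAvoiding H u₁ u₂) ^ Fintype.card (componentsAvoiding H u₁ u₂) *
        #(H.edgeConstantLabelings β u₁ u₂) := by
  set c := Fintype.card (componentsAvoiding H u₁ u₂)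
  set K := Fintype.card β
  rcases hx.lt_or_eq with hlt | rfl
  · have hK : 0 < K ^ x := pow_pos Fintype.card_pos x
    refine Nat.le_of_mul_le_mul_right ?_ hK
    calc _ = #{z ∈ H.edgeConstantLabelings β u₁ u₂ | #(V.image z) - 1 = x} * K ^ c := by
          rw [mul_assoc, pow_sub_mul_pow K hx]
      _ ≤ #(H.edgeConstantLabelings β u₁ u₂) * (K.choose x * (x + 1) ^ c) :=
          card_filter_card_image_sub_one_mul_le hV x
      _ ≤ #(H.edgeConstantLabelings β u₁ u₂) * (K ^ x * c ^ c) := by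
          gcongr
          · exact Nat.choose_le_pow K x
          · exact hlt
      _ = _ := by ring
  · rw [Nat.sub_self, pow_zero, mul_one]
    exact (card_filter_le _ _).trans (Nat.le_mul_of_pos_left _ Nat.pow_self_pos)

end Avoiding

end SimpleGraph

theorem PMF.toMeasure_uniformOfFintype_cond_apply {Ω : Type*} [Fintype Ω] [Nonempty Ω]
    [MeasurableSpace Ω] [MeasurableSingletonClass Ω] (A : Finset Ω) (p : Ω → Prop)
    [DecidablePred p] :
    (uniformOfFintype Ω).toMeasure[|(A : Set Ω)] {ω | p ω} = #{ω ∈ A | p ω} / #A := by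
  have hN : (Fintype.card Ω : ENNReal) ≠ 0 := by simp
  have hinter : (A : Set Ω) ∩ {ω | p ω} = ↑{ω ∈ A | p ω} := by ext; simp
  rw [ProbabilityTheory.cond_apply A.measurableSet, hinter,
    toMeasure_uniformOfFintype_apply _ A.measurableSet,
    toMeasure_uniformOfFintype_apply _ (A.filter p).measurableSet]
  simp only [coe_sort_coe, Fintype.card_coe]
  rw [ENNReal.inv_div (Or.inl (by simp)) (Or.inl hN), mul_comm, div_eq_mul_inv, div_eq_mul_inv,
    mul_assoc, ← mul_assoc _ (Fintype.card Ω : ENNReal), ENNReal.inv_mul_cancel hN (by simp),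
    one_mul, div_eq_mul_inv]

theorem ENNReal.natCast_div_le_natCast_div_of_mul_le {a b c d : ℕ} (hd : d ≠ 0)
    (h : a * d ≤ c * b) : (a : ENNReal) / b ≤ c / d := by
  refine ENNReal.div_le_of_le_mul ?_
  rw [← ENNReal.mul_div_right_comm, ENNReal.le_div_iff_mul_le (Or.inl (by simpa))
    (Or.inl (by simp))]
  exact_mod_cast h

/-- With `A` the event that every edge of `H` is monochromatic and `z_{v₁} = z_{v₂}`, and
`cc ≥ 1` the number of components of `H` (on `V`) avoiding both distinguished vertices:
on `A` the number `ℓ(z)` of distinct labels on `V` satisfies `ℓ(z) - 1 ≤ cc`, and for every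
`x ≤ cc`, `P(ℓ(z) - 1 = x | A) ≤ cc^cc · K^{-(cc-x)}`. -/
theorem stmt_13 (n K : ℕ) [NeZero K] (H : SimpleGraph (Fin n))
    (V : Finset (Fin n)) (v1 v2 : Fin n) (hv1 : v1 ∈ V) (hv2 : v2 ∈ V)
    (hsupp : ∀ x y, H.Adj x y → x ∈ V ∧ y ∈ V)
    (cc : ℕ)
    (hcc : cc = Set.ncard {C : (H.induce (V : Set (Fin n))).ConnectedComponent |
        (⟨v1, by simpa using hv1⟩ : (V : Set (Fin n))) ∉ C.supp ∧
        (⟨v2, by simpa using hv2⟩ : (V : Set (Fin n))) ∉ C.supp})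
    (A : Set (Fin n → Fin K))
    (hA : A = {z | (∀ x y, H.Adj x y → z x = z y) ∧ z v1 = z v2}) :
    (∀ z ∈ A, (V.image z).card - 1 ≤ cc) ∧
      ∀ x : ℕ, x ≤ cc →
        (PMF.uniformOfFintype (Fin n → Fin K)).toMeasure[|A]
            {z | (V.image z).card - 1 = x}
          ≤ (cc : ENNReal) ^ cc * ((K : ENNReal) ^ (cc - x))⁻¹ := by
  classical
  let u₁ : (V : Set (Fin n)) := ⟨v1, by simpa using hv1⟩
  let u₂ : (V : Set (Fin n)) := ⟨v2, by simpa using hv2⟩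
  have hcard : Fintype.card (H.componentsAvoiding u₁ u₂) = cc := by
    rw [hcc, ← Nat.card_eq_fintype_card]
    rfl
  have hA' : A = H.edgeConstantLabelings (Fin K) u₁ u₂ := by
    ext z; simp [hA, SimpleGraph.edgeConstantLabelings, u₁, u₂]
  refine ⟨fun z hz => ?_, fun x hx => ?_⟩
  · rw [hA] at hz
    rw [SimpleGraph.card_image_sub_one_eq (u₁ := u₁) (u₂ := u₂) hz.1 hz.2, ← hcard]
    exact (card_erase_le).trans (card_image_le.trans_eq (card_univ))
  · rw [hA', PMF.toMeasure_uniformOfFintype_cond_apply]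
    have hcount :=
      SimpleGraph.card_filter_card_image_sub_one_mul_pow_le (β := Fin K) hsupp (hcard ▸ hx)
    rw [hcard, Fintype.card_fin] at hcount
    convert ENNReal.natCast_div_le_natCast_div_of_mul_le (pow_ne_zero _ (NeZero.ne K)) hcount
      using 1
    push_cast
    rw [div_eq_mul_inv]
end

section
/- The number of ordered pairs (π⁽¹⁾, π⁽²⁾) of injections from a set V of size D+2 (with two distinguished elements v₁, v₂) into [n], with π⁽ᵏ⁾(v₁) = 1 and π⁽ᵏ⁾(v₂) = 2 for k = 1,2, and with |range(π⁽¹⁾) ∩ range(π⁽²⁾)| = 2 + u, is at most (D choose u)² · u! · (n−2)!/(n−2−D)! · (n−2−D)!/(n−2−2D+u)! ≤ ((n−2)!/(n−2−D)!)² · D^{2u} / (n−2−D)^u, for every 0 ≤ u ≤ D, provided n ≥ 2D + 4. -/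
open Finset

private lemma card_le_two_blocks {α β : Type*} [Fintype α] [DecidableEq α] [Fintype β]
    [DecidableEq β] (s1 s2 : Finset α) (t1 t2 : Finset β) (G : Finset (α → β))
    (h1 : ∀ g ∈ G, Function.Injective g)
    (h2 : ∀ g ∈ G, ∀ w ∈ s1, g w ∈ t1)
    (h3 : ∀ g ∈ G, ∀ w ∈ s2, g w ∈ t2)
    (hdet : ∀ g ∈ G, ∀ g' ∈ G, (∀ w ∈ s1, g w = g' w) → (∀ w ∈ s2, g w = g' w) → g = g') :
    G.card ≤ t1.card.descFactorial s1.card * t2.card.descFactorial s2.card := by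
  classical
  have key : Fintype.card ↥G ≤ Fintype.card ((↥s1 ↪ ↥t1) × (↥s2 ↪ ↥t2)) := by
    apply Fintype.card_le_of_injective (fun g =>
      (⟨fun w => ⟨g.1 w.1, h2 g.1 g.2 w.1 w.2⟩,
        fun w w' hww' => Subtype.ext (h1 g.1 g.2 (congrArg Subtype.val hww'))⟩,
       ⟨fun w => ⟨g.1 w.1, h3 g.1 g.2 w.1 w.2⟩,
        fun w w' hww' => Subtype.ext (h1 g.1 g.2 (congrArg Subtype.val hww'))⟩))
    intro g g' hgg'
    have e1 := congrArg Prod.fst hgg'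
    have e2 := congrArg Prod.snd hgg'
    apply Subtype.ext
    apply hdet g.1 g.2 g'.1 g'.2
    · intro w hw
      exact congrArg Subtype.val (DFunLike.congr_fun e1 ⟨w, hw⟩)
    · intro w hw
      exact congrArg Subtype.val (DFunLike.congr_fun e2 ⟨w, hw⟩)
  rwa [Fintype.card_coe, Fintype.card_prod, Fintype.card_embedding_eq,
    Fintype.card_embedding_eq, Fintype.card_coe, Fintype.card_coe, Fintype.card_coe,
    Fintype.card_coe] at key

private lemma count_le {V : Type*} [Fintype V] [DecidableEq V]
    (D : ℕ) (hV : Fintype.card V = D + 2) (v1 v2 : V) (hne : v1 ≠ v2)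
    (n : ℕ) (hn : 2 * D + 4 ≤ n) (u : ℕ) (hu : u ≤ D)
    (a b : Fin n) (hab : a ≠ b) :
    (Finset.univ.filter (fun π : (V → Fin n) × (V → Fin n) =>
        Function.Injective π.1 ∧ Function.Injective π.2 ∧
        π.1 v1 = a ∧ π.1 v2 = b ∧ π.2 v1 = a ∧ π.2 v2 = b ∧
        (Finset.image π.1 Finset.univ ∩ Finset.image π.2 Finset.univ).card = 2 + u)).card
      ≤ (n - 2).descFactorial D *
        (D.choose u * (D.descFactorial u * ((n - 2 - D).descFactorial (D - u)))) := by
  classical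
  set s0 : Finset V := Finset.univ \ {v1, v2} with hs0
  have hs0card : s0.card = D := by
    rw [hs0, card_sdiff_of_subset (subset_univ _), card_univ, hV, card_pair hne]
    omega
  have hmemS0 : ∀ w : V, w ∈ s0 ↔ w ≠ v1 ∧ w ≠ v2 := by
    intro w; simp [hs0, not_or]
  set T := Finset.univ.filter (fun π : (V → Fin n) × (V → Fin n) =>
        Function.Injective π.1 ∧ Function.Injective π.2 ∧
        π.1 v1 = a ∧ π.1 v2 = b ∧ π.2 v1 = a ∧ π.2 v2 = b ∧
        (Finset.image π.1 Finset.univ ∩ Finset.image π.2 Finset.univ).card = 2 + u) with hT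
  set A : Finset (V → Fin n) :=
    Finset.univ.filter (fun f => Function.Injective f ∧ f v1 = a ∧ f v2 = b) with hA
  set P := s0.powersetCard u with hP
  set F : (V → Fin n) × (V → Fin n) → (V → Fin n) × Finset V :=
    fun π => (π.1, s0.filter (fun w => π.2 w ∈ Finset.image π.1 Finset.univ)) with hF
  have hmaps : ∀ π ∈ T, F π ∈ A ×ˢ P := by
    rintro ⟨f, g⟩ hπ
    simp only [hT, mem_filter, mem_univ, true_and] at hπ
    obtain ⟨hf, hg, hfa, hfb, hga, hgb, hcard⟩ := hπ
    rw [mem_product]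
    constructor
    · simp only [hA, hF, mem_filter, mem_univ, true_and]
      exact ⟨hf, hfa, hfb⟩
    · rw [hP, mem_powersetCard]
      refine ⟨filter_subset _ _, ?_⟩
      have key : (s0.filter (fun w => g w ∈ image f univ)).card
          = ((image f univ ∩ image g univ) \ {a, b}).card := by
        apply card_bij (fun w _ => g w)
        · intro w hw
          rw [mem_filter, hmemS0] at hw
          obtain ⟨⟨hw1, hw2⟩, hwf⟩ := hw
          simp only [mem_sdiff, mem_inter, mem_insert, mem_singleton, not_or]
          refine ⟨⟨hwf, mem_image_of_mem g (mem_univ w)⟩, ?_, ?_⟩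
          · intro h; exact hw1 (hg (h.trans hga.symm))
          · intro h; exact hw2 (hg (h.trans hgb.symm))
        · intro w hw w' hw' h; exact hg h
        · intro x hx
          simp only [mem_sdiff, mem_inter, mem_insert, mem_singleton, not_or, mem_image,
            mem_univ, true_and] at hx
          obtain ⟨⟨hxf, w, hwx⟩, hxa, hxb⟩ := hx
          refine ⟨w, ?_, hwx⟩
          rw [mem_filter, hmemS0]
          refine ⟨⟨?_, ?_⟩, by rw [hwx]; simpa using hxf⟩
          · rintro rfl; rw [hga] at hwx; exact hxa hwx.symm
          · rintro rfl; rw [hgb] at hwx; exact hxb hwx.symm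
      have habsub : ({a, b} : Finset (Fin n)) ⊆ image f univ ∩ image g univ := by
        intro x hx
        rw [mem_inter]
        rcases mem_insert.1 hx with rfl | hx
        · exact ⟨hfa ▸ mem_image_of_mem f (mem_univ v1), hga ▸ mem_image_of_mem g (mem_univ v1)⟩
        · rw [mem_singleton] at hx; subst hx
          exact ⟨hfb ▸ mem_image_of_mem f (mem_univ v2), hgb ▸ mem_image_of_mem g (mem_univ v2)⟩
      rw [key, card_sdiff_of_subset habsub, hcard, card_pair hab]
      omega
  have hsum := card_eq_sum_card_fiberwise hmaps
  have hAcard : A.card ≤ (n - 2).descFactorial D := by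
    have := card_le_two_blocks s0 (∅ : Finset V) (Finset.univ \ {a, b}) (∅ : Finset (Fin n)) A
      (fun g hg => (mem_filter.1 hg).2.1)
      (by
        intro g hg w hw
        simp only [hA, mem_filter, mem_univ, true_and] at hg
        obtain ⟨hginj, hga, hgb⟩ := hg
        rw [hmemS0] at hw
        simp only [mem_sdiff, mem_univ, true_and, mem_insert, mem_singleton, not_or]
        constructor
        · intro h; exact hw.1 (hginj (h.trans hga.symm))
        · intro h; exact hw.2 (hginj (h.trans hgb.symm)))
      (fun g hg w hw => absurd hw (notMem_empty w))
      (by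
        intro g hg g' hg' hagree _
        simp only [hA, mem_filter, mem_univ, true_and] at hg hg'
        funext v
        by_cases h1 : v = v1
        · rw [h1, hg.2.1, hg'.2.1]
        · by_cases h2 : v = v2
          · rw [h2, hg.2.2, hg'.2.2]
          · exact hagree v ((hmemS0 v).2 ⟨h1, h2⟩))
    simpa [hs0card, card_sdiff_of_subset (subset_univ _), card_univ, card_pair hab] using this
  have hfiber : ∀ x ∈ A ×ˢ P, (T.filter fun π => F π = x).card
      ≤ D.descFactorial u * (n - 2 - D).descFactorial (D - u) := by
    rintro ⟨f, S⟩ hx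
    rw [mem_product] at hx
    obtain ⟨hfA, hSP⟩ := hx
    simp only [hA, mem_filter, mem_univ, true_and] at hfA
    obtain ⟨hf, hfa, hfb⟩ := hfA
    rw [hP, mem_powersetCard] at hSP
    obtain ⟨hSsub, hScard⟩ := hSP
    dsimp only at hSsub hScard
    set R1 : Finset (Fin n) := (image f univ) \ {a, b} with hR1
    set R2 : Finset (Fin n) := Finset.univ \ image f univ with hR2
    have himcard : (image f univ).card = D + 2 := by
      rw [card_image_of_injective _ hf, card_univ, hV]
    have habim : ({a, b} : Finset (Fin n)) ⊆ image f univ := by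
      intro x hx
      rcases mem_insert.1 hx with rfl | hx
      · exact hfa ▸ mem_image_of_mem f (mem_univ v1)
      · rw [mem_singleton] at hx; subst hx
        exact hfb ▸ mem_image_of_mem f (mem_univ v2)
    have hR1card : R1.card = D := by
      rw [hR1, card_sdiff_of_subset habim, himcard, card_pair hab]
      omega
    have hR2card : R2.card = n - 2 - D := by
      rw [hR2, card_sdiff_of_subset (subset_univ _), card_univ, himcard, Fintype.card_fin]; omega
    -- the fiber injects (via Prod.snd) into a set of functions
    have hstep : (T.filter fun π => F π = (f, S)).card
        = ((T.filter fun π => F π = (f, S)).image Prod.snd).card := by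
      rw [card_image_of_injOn]
      intro p hp q hq hpq
      simp only [mem_coe, mem_filter] at hp hq
      have hp1 : p.1 = f := congrArg Prod.fst hp.2
      have hq1 : q.1 = f := congrArg Prod.fst hq.2
      exact Prod.ext (hp1.trans hq1.symm) hpq
    set G := (T.filter fun π => F π = (f, S)).image Prod.snd with hG
    have hGmem : ∀ g ∈ G, Function.Injective g ∧ g v1 = a ∧ g v2 = b ∧
        (s0.filter (fun w => g w ∈ image f univ)) = S := by
      intro g hg
      simp only [hG, mem_image] at hg
      obtain ⟨π, hπ, rfl⟩ := hg
      rw [mem_filter] at hπ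
      obtain ⟨hπT, hπF⟩ := hπ
      have hπ1 : π.1 = f := congrArg Prod.fst hπF
      have hπ2 : s0.filter (fun w => π.2 w ∈ image π.1 univ) = S := congrArg Prod.snd hπF
      simp only [hT, mem_filter, mem_univ, true_and] at hπT
      obtain ⟨-, hg, -, -, hga, hgb, -⟩ := hπT
      rw [hπ1] at hπ2
      exact ⟨hg, hga, hgb, hπ2⟩
    have hGbound := card_le_two_blocks S (s0 \ S) R1 R2 G
      (fun g hg => (hGmem g hg).1)
      (by
        intro g hg w hw
        obtain ⟨hginj, hga, hgb, hgS⟩ := hGmem g hg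
        have hw' : w ∈ s0.filter (fun w => g w ∈ image f univ) := hgS ▸ hw
        rw [mem_filter, hmemS0] at hw'
        obtain ⟨⟨hw1, hw2⟩, hwf⟩ := hw'
        rw [hR1]
        simp only [mem_sdiff, mem_insert, mem_singleton, not_or]
        refine ⟨hwf, ?_, ?_⟩
        · intro h; exact hw1 (hginj (h.trans hga.symm))
        · intro h; exact hw2 (hginj (h.trans hgb.symm)))
      (by
        intro g hg w hw
        obtain ⟨hginj, hga, hgb, hgS⟩ := hGmem g hg
        rw [mem_sdiff] at hw
        obtain ⟨hws0, hwS⟩ := hw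
        rw [hR2, mem_sdiff]
        refine ⟨mem_univ _, ?_⟩
        intro hcon
        exact hwS (hgS ▸ (mem_filter.2 ⟨hws0, hcon⟩)))
      (by
        intro g hg g' hg' hagree1 hagree2
        obtain ⟨-, hga, hgb, -⟩ := hGmem g hg
        obtain ⟨-, hga', hgb', -⟩ := hGmem g' hg'
        funext v
        by_cases h1 : v = v1
        · rw [h1, hga, hga']
        · by_cases h2 : v = v2
          · rw [h2, hgb, hgb']
          · have hvs0 : v ∈ s0 := (hmemS0 v).2 ⟨h1, h2⟩
            by_cases hvS : v ∈ S
            · exact hagree1 v hvS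
            · exact hagree2 v (mem_sdiff.2 ⟨hvs0, hvS⟩))
    rw [hstep]
    calc G.card ≤ R1.card.descFactorial S.card * R2.card.descFactorial (s0 \ S).card := hGbound
      _ = D.descFactorial u * (n - 2 - D).descFactorial (D - u) := by
          rw [hR1card, hR2card, hScard, card_sdiff_of_subset hSsub, hs0card, hScard]
  calc T.card = ∑ x ∈ A ×ˢ P, (T.filter fun π => F π = x).card := hsum
    _ ≤ (A ×ˢ P).card * (D.descFactorial u * (n - 2 - D).descFactorial (D - u)) := by
        rw [← smul_eq_mul]
        exact Finset.sum_le_card_nsmul _ _ _ hfiber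
    _ ≤ (n - 2).descFactorial D *
        (D.choose u * (D.descFactorial u * ((n - 2 - D).descFactorial (D - u)))) := by
        rw [card_product, hP, card_powersetCard, hs0card]
        calc A.card * (D.choose u) * (D.descFactorial u * (n - 2 - D).descFactorial (D - u))
            ≤ (n - 2).descFactorial D * (D.choose u) *
              (D.descFactorial u * (n - 2 - D).descFactorial (D - u)) :=
              Nat.mul_le_mul (Nat.mul_le_mul hAcard le_rfl) le_rfl
          _ = _ := by ring

private lemma real_fact_div (N k : ℕ) (h : k ≤ N) :
    ((N.factorial : ℝ) / (N - k).factorial) = (N.descFactorial k : ℝ) := by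
  rw [div_eq_iff (by positivity : ((N - k).factorial : ℝ) ≠ 0)]
  exact_mod_cast (by rw [Nat.mul_comm]; exact (Nat.factorial_mul_descFactorial h).symm :
    N.factorial = N.descFactorial k * (N - k).factorial)

/-- Counting ordered pairs of injections `π⁽¹⁾, π⁽²⁾ : V → [n]` sending the two
distinguished vertices to `1` and `2` respectively, whose ranges overlap in exactly
`2 + u` points. -/
theorem stmt_14 {V : Type*} [Fintype V] [DecidableEq V]
    (D : ℕ) (hV : Fintype.card V = D + 2) (v1 v2 : V) (hne : v1 ≠ v2)
    (n : ℕ) (hn : 2 * D + 4 ≤ n) (u : ℕ) (hu : u ≤ D) :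
    ((Finset.univ.filter (fun π : (V → Fin n) × (V → Fin n) =>
        Function.Injective π.1 ∧ Function.Injective π.2 ∧
        π.1 v1 = ⟨1, by omega⟩ ∧ π.1 v2 = ⟨2, by omega⟩ ∧
        π.2 v1 = ⟨1, by omega⟩ ∧ π.2 v2 = ⟨2, by omega⟩ ∧
        (Finset.image π.1 Finset.univ ∩ Finset.image π.2 Finset.univ).card = 2 + u)).card
        : ℝ)
      ≤ (D.choose u : ℝ) ^ 2 * u.factorial *
          ((n - 2).factorial / (n - 2 - D).factorial) *
          ((n - 2 - D).factorial / (n - 2 - 2 * D + u).factorial) ∧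
    (D.choose u : ℝ) ^ 2 * u.factorial *
          ((n - 2).factorial / (n - 2 - D).factorial) *
          ((n - 2 - D).factorial / (n - 2 - 2 * D + u).factorial)
      ≤ ((n - 2).factorial / (n - 2 - D).factorial : ℝ) ^ 2 *
          (D : ℝ) ^ (2 * u) / (n - 2 - D : ℝ) ^ u := by
  have hab : (⟨1, by omega⟩ : Fin n) ≠ ⟨2, by omega⟩ := by
    simp [Fin.ext_iff]
  have hcount := count_le D hV v1 v2 hne n hn u hu ⟨1, by omega⟩ ⟨2, by omega⟩ hab
  have hDn : D ≤ n - 2 := by omega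
  have hDu : D - u ≤ n - 2 - D := by omega
  have e1 : (((n - 2).factorial : ℝ) / (n - 2 - D).factorial)
      = ((n - 2).descFactorial D : ℝ) := real_fact_div _ _ hDn
  have e2 : (((n - 2 - D).factorial : ℝ) / (n - 2 - 2 * D + u).factorial)
      = ((n - 2 - D).descFactorial (D - u) : ℝ) := by
    have h : n - 2 - D - (D - u) = n - 2 - 2 * D + u := by omega
    rw [← h]
    exact real_fact_div _ _ hDu
  constructor
  · calc ((Finset.univ.filter (fun π : (V → Fin n) × (V → Fin n) =>
        Function.Injective π.1 ∧ Function.Injective π.2 ∧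
        π.1 v1 = ⟨1, by omega⟩ ∧ π.1 v2 = ⟨2, by omega⟩ ∧
        π.2 v1 = ⟨1, by omega⟩ ∧ π.2 v2 = ⟨2, by omega⟩ ∧
        (Finset.image π.1 Finset.univ ∩ Finset.image π.2 Finset.univ).card = 2 + u)).card : ℝ)
        ≤ (((n - 2).descFactorial D *
            (D.choose u * (D.descFactorial u * ((n - 2 - D).descFactorial (D - u)))) : ℕ) : ℝ) := by
          exact_mod_cast hcount
      _ = (D.choose u : ℝ) ^ 2 * u.factorial *
          ((n - 2).factorial / (n - 2 - D).factorial) *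
          ((n - 2 - D).factorial / (n - 2 - 2 * D + u).factorial) := by
          rw [e1, e2, Nat.descFactorial_eq_factorial_mul_choose D u]
          push_cast
          ring
  · have hm0 : 0 < n - 2 - D := by omega
    have hcast : ((n : ℝ) - 2 - (D : ℝ)) = ((n - 2 - D : ℕ) : ℝ) := by
      rw [Nat.cast_sub (by omega : D ≤ n - 2), Nat.cast_sub (by omega : 2 ≤ n)]
      norm_num
    have key : (D.choose u) ^ 2 * u.factorial * ((n - 2).descFactorial D) *
        ((n - 2 - D).descFactorial (D - u)) * (n - 2 - D) ^ u
        ≤ ((n - 2).descFactorial D) ^ 2 * D ^ (2 * u) := by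
      have h1 : D.choose u * u.factorial ≤ D ^ u := by
        calc D.choose u * u.factorial = u.factorial * D.choose u := Nat.mul_comm _ _
          _ = D.descFactorial u := (Nat.descFactorial_eq_factorial_mul_choose D u).symm
          _ ≤ D ^ u := Nat.descFactorial_le_pow D u
      have h2 : D.choose u ≤ D ^ u :=
        le_trans (Nat.le_mul_of_pos_right _ u.factorial_pos) h1
      have h3 : (n - 2 - D).descFactorial (D - u) * (n - 2 - D) ^ u
          ≤ (n - 2).descFactorial D := by
        calc (n - 2 - D).descFactorial (D - u) * (n - 2 - D) ^ u
            ≤ (n - 2 - u).descFactorial (D - u) * (n - 2).descFactorial u :=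
              Nat.mul_le_mul (Nat.descFactorial_le _ (by omega))
                (le_trans (Nat.pow_le_pow_left (by omega) u)
                  (Nat.pow_sub_le_descFactorial (n - 2) u))
          _ = (n - 2).descFactorial D := Nat.descFactorial_mul_descFactorial hu
      calc (D.choose u) ^ 2 * u.factorial * ((n - 2).descFactorial D) *
            ((n - 2 - D).descFactorial (D - u)) * (n - 2 - D) ^ u
          = (D.choose u * (D.choose u * u.factorial)) *
            (((n - 2 - D).descFactorial (D - u) * (n - 2 - D) ^ u) *
              ((n - 2).descFactorial D)) := by ring
        _ ≤ (D ^ u * D ^ u) * (((n - 2).descFactorial D) * ((n - 2).descFactorial D)) :=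
            Nat.mul_le_mul (Nat.mul_le_mul h2 h1) (Nat.mul_le_mul h3 le_rfl)
        _ = ((n - 2).descFactorial D) ^ 2 * D ^ (2 * u) := by
            rw [two_mul, pow_add]; ring
    rw [e1, e2, hcast, le_div_iff₀ (by positivity)]
    exact_mod_cast key
end

section
/- Let G = (V,E) be a connected graph and π⁽¹⁾, π⁽²⁾ : V → [n] two injections agreeing on the distinguished vertices v₁ ↦ 1, v₂ ↦ 2, with |range(π⁽¹⁾) ∩ range(π⁽²⁾)| = 2 + u where 0 ≤ u ≤ |V| − 2. Let E_Δ⁽²⁾ be the set of edges of π⁽²⁾(G) having at least one endpoint outside range(π⁽¹⁾). Then for i.i.d. uniform labels z₁,…,z_n on {1,…,K}, conditionally on the labels of all vertices in range(π⁽¹⁾), the probability that every edge of E_Δ⁽²⁾ is monochromatic is at most K^{−(|V| − 2 − u)}. -/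
open scoped ProbabilityTheory

theorem aux_forced {V α β : Type*} (G : SimpleGraph V) (hG : G.Connected)
    (π2 : V → α) (S : Set α) (v0 : V) (base : π2 v0 ∈ S) (v : V) :
    ∃ v', π2 v' ∈ S ∧ ∀ z : α → β,
      (∀ a b, G.Adj a b → (π2 a ∉ S ∨ π2 b ∉ S) → z (π2 a) = z (π2 b)) →
      z (π2 v) = z (π2 v') := by
  obtain ⟨p⟩ := hG.preconnected v v0
  induction p with
  | nil => exact ⟨_, base, fun z _ => rfl⟩
  | @cons a b c hab p ih =>
    by_cases ha : π2 a ∈ S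
    · exact ⟨a, ha, fun z _ => rfl⟩
    · obtain ⟨v', hv', hz⟩ := ih base
      exact ⟨v', hv', fun z hzA => (hzA a b hab (Or.inl ha)).trans (hz z hzA)⟩

/-- Let `G` be a connected graph and `π⁽¹⁾, π⁽²⁾ : V → [n]` injections agreeing on the two
distinguished vertices (sent to the labels `0` and `1` of `Fin n`, playing the role of
`1` and `2`), with range overlap `2 + u`. Let `E_Δ⁽²⁾` be the edges of `π⁽²⁾(G)` with at
least one endpoint outside `range π⁽¹⁾`. Then, conditionally on the labels of all vertices
of `range π⁽¹⁾` (i.e. on the event that `z` agrees with an arbitrary fixed `w` on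
`range π⁽¹⁾`), the probability that every edge of `E_Δ⁽²⁾` is monochromatic is at most
`K^{-(|V| - 2 - u)}`. -/
theorem stmt_18 {V : Type*} [Fintype V] (G : SimpleGraph V) (hG : G.Connected)
    (n K : ℕ) [NeZero K] (hn : 2 ≤ n)
    (v1 v2 : V) (hne : v1 ≠ v2)
    (π1 π2 : V → Fin n) (h1 : Function.Injective π1) (h2 : Function.Injective π2)
    (hπ1v1 : π1 v1 = ⟨0, by omega⟩) (hπ1v2 : π1 v2 = ⟨1, by omega⟩)
    (hπ2v1 : π2 v1 = ⟨0, by omega⟩) (hπ2v2 : π2 v2 = ⟨1, by omega⟩)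
    (u : ℕ) (hu : u ≤ Fintype.card V - 2)
    (hovl : (Set.range π1 ∩ Set.range π2).ncard = 2 + u)
    (w : Fin n → Fin K) :
    (PMF.uniformOfFintype (Fin n → Fin K)).toMeasure[|{z | ∀ x ∈ Set.range π1, z x = w x}]
        {z | ∀ v v', G.Adj v v' →
          (π2 v ∉ Set.range π1 ∨ π2 v' ∉ Set.range π1) → z (π2 v) = z (π2 v')}
      ≤ ((K : ENNReal) ^ (Fintype.card V - 2 - u))⁻¹ := by
  classical
  have key := aux_forced (β := Fin K) G hG π2 (Set.range π1) v1 ⟨v1, by rw [hπ1v1, hπ2v1]⟩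
  choose g hgS hgz using key
  set h0 : Fin n → Fin K := fun x =>
    if x ∈ Set.range π1 then w x
    else if hx : ∃ v, π2 v = x then w (π2 (g hx.choose)) else w x with hh0
  set SF : Finset (Fin n) := Finset.univ.image π1 with hSF
  set TF : Finset (Fin n) := Finset.univ.image π2 \ SF with hTF
  have hSFmem : ∀ x, x ∈ SF ↔ x ∈ Set.range π1 := by
    intro x; simp [hSF, Set.mem_range, eq_comm]
  have hTFmem : ∀ x, x ∈ TF ↔ (x ∈ Set.range π2 ∧ x ∉ Set.range π1) := by
    intro x; simp [hTF, hSFmem, Set.mem_range, eq_comm]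
  set Cs : Finset (Fin n → Fin K) := Finset.univ.filter (fun z => ∀ x ∈ SF, z x = w x) with hCs
  set Ds : Finset (Fin n → Fin K) :=
    Finset.univ.filter (fun z => ∀ x ∈ SF ∪ TF, z x = h0 x) with hDs
  set C : Set (Fin n → Fin K) := {z | ∀ x ∈ Set.range π1, z x = w x} with hC
  set A : Set (Fin n → Fin K) := {z | ∀ v v', G.Adj v v' →
      (π2 v ∉ Set.range π1 ∨ π2 v' ∉ Set.range π1) → z (π2 v) = z (π2 v')} with hA
  have hCeq : C = ↑Cs := by
    ext z
    simp only [hC, Set.mem_setOf_eq, hCs, Finset.coe_filter, Finset.mem_univ, true_and]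
    exact ⟨fun h x hx => h x ((hSFmem x).1 hx), fun h x hx => h x ((hSFmem x).2 hx)⟩
  have hh0w : ∀ x ∈ Set.range π1, h0 x = w x := by
    intro x hx
    simp only [hh0]
    rw [if_pos hx]
  have hsub : C ∩ A ⊆ ↑Ds := by
    rintro z ⟨hzC, hzA⟩
    have hzC' : ∀ x ∈ Set.range π1, z x = w x := hzC
    have hzA' : ∀ a b, G.Adj a b → (π2 a ∉ Set.range π1 ∨ π2 b ∉ Set.range π1) →
        z (π2 a) = z (π2 b) := hzA
    refine Finset.mem_coe.2 (Finset.mem_filter.2 ⟨Finset.mem_univ _, ?_⟩)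
    intro x hx
    rcases Finset.mem_union.1 hx with hxS | hxT
    · rw [hh0w x ((hSFmem x).1 hxS)]; exact hzC' x ((hSFmem x).1 hxS)
    · obtain ⟨hx2, hx1⟩ := (hTFmem x).1 hxT
      obtain ⟨v, hv⟩ := hx2
      have hex : ∃ v', π2 v' = x := ⟨v, hv⟩
      have hche : hex.choose = v := h2 (hex.choose_spec.trans hv.symm)
      have hval : h0 x = w (π2 (g v)) := by
        simp only [hh0]
        rw [if_neg hx1, dif_pos hex, hche]
      rw [hval, ← hzC' (π2 (g v)) (hgS v), ← hv]
      exact hgz v z hzA'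
  -- counting
  have hcount : Ds.card * K ^ TF.card ≤ Cs.card := by
    set Φ : (↥Ds × (↥TF → Fin K)) → (Fin n → Fin K) :=
      fun p x => if hx : x ∈ TF then p.2 ⟨x, hx⟩ else (p.1 : Fin n → Fin K) x with hΦ
    have hΦCs : ∀ p, Φ p ∈ Cs := by
      rintro ⟨⟨z, hz⟩, y⟩
      refine Finset.mem_filter.2 ⟨Finset.mem_univ _, ?_⟩
      intro x hx
      have hxT : x ∉ TF := fun hxT => ((hTFmem x).1 hxT).2 ((hSFmem x).1 hx)
      have hzP := (Finset.mem_filter.1 hz).2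
      show (if hx' : x ∈ TF then y ⟨x, hx'⟩ else z x) = w x
      rw [dif_neg hxT, hzP x (Finset.mem_union_left _ hx), hh0w x ((hSFmem x).1 hx)]
    have hΦinj : Function.Injective (fun p => (⟨Φ p, hΦCs p⟩ : ↥Cs)) := by
      rintro ⟨⟨z, hz⟩, y⟩ ⟨⟨z', hz'⟩, y'⟩ h
      have heqf : Φ (⟨z, hz⟩, y) = Φ (⟨z', hz'⟩, y') := Subtype.ext_iff.1 h
      have heq : ∀ x, (if hx : x ∈ TF then y ⟨x, hx⟩ else z x)
          = (if hx : x ∈ TF then y' ⟨x, hx⟩ else z' x) := fun x => congrFun heqf x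
      have hy : y = y' := by
        funext xx
        obtain ⟨x, hx⟩ := xx
        have := heq x
        rwa [dif_pos hx, dif_pos hx] at this
      have hzz : z = z' := by
        funext x
        by_cases hx : x ∈ TF
        · rw [(Finset.mem_filter.1 hz).2 x (Finset.mem_union_right _ hx),
            (Finset.mem_filter.1 hz').2 x (Finset.mem_union_right _ hx)]
        · have := heq x
          rwa [dif_neg hx, dif_neg hx] at this
      simp [hy, hzz]
    have hle := Fintype.card_le_of_injective _ hΦinj
    rwa [Fintype.card_prod, Fintype.card_coe, Fintype.card_coe, Fintype.card_fun,
      Fintype.card_coe, Fintype.card_fin] at hle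
  -- exponent
  have hcard2 : 2 ≤ Fintype.card V := by
    have : Nontrivial V := ⟨v1, v2, hne⟩
    exact Fintype.one_lt_card
  have hTcard : TF.card = Fintype.card V - 2 - u := by
    have himg : (Finset.univ.image π2).card = Fintype.card V := by
      rw [Finset.card_image_of_injective _ h2, Finset.card_univ]
    have hint : ((Finset.univ.image π2) ∩ SF).card = 2 + u := by
      rw [← hovl, ← Set.ncard_coe_finset]
      congr 1
      ext x
      simp only [Finset.coe_inter, Set.mem_inter_iff, Finset.mem_coe, hSFmem,
        Set.mem_range, Finset.mem_image, Finset.mem_univ, true_and]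
      tauto
    have hle2u : 2 + u ≤ Fintype.card V := by
      rw [← himg, ← hint]
      exact Finset.card_le_card Finset.inter_subset_left
    have := Finset.card_sdiff_add_card_inter (Finset.univ.image π2) SF
    rw [hint, himg, ← hTF] at this
    omega
  have hDsne : 0 < Ds.card :=
    Finset.card_pos.2 ⟨h0, Finset.mem_filter.2 ⟨Finset.mem_univ _, fun x _ => rfl⟩⟩
  have hCsne : 0 < Cs.card :=
    Finset.card_pos.2 ⟨w, Finset.mem_filter.2 ⟨Finset.mem_univ _, fun x _ => rfl⟩⟩
  -- measures
  set N : ENNReal := ((Fintype.card (Fin n → Fin K) : ENNReal))⁻¹ with hN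
  have hmeas : ∀ F : Finset (Fin n → Fin K),
      (PMF.uniformOfFintype (Fin n → Fin K)).toMeasure ↑F = (F.card : ENNReal) * N := by
    intro F
    rw [PMF.toMeasure_apply_finset]
    simp only [PMF.uniformOfFintype_apply, Finset.sum_const, nsmul_eq_mul, hN]
  have hNne : N ≠ 0 := ENNReal.inv_ne_zero.2 (ENNReal.natCast_ne_top _)
  have hNnetop : N ≠ ⊤ := ENNReal.inv_ne_top.2 (Nat.cast_ne_zero.2 Fintype.card_ne_zero)
  have hmC : (PMF.uniformOfFintype (Fin n → Fin K)).toMeasure C = (Cs.card : ENNReal) * N := by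
    rw [hCeq]; exact hmeas Cs
  rw [ProbabilityTheory.cond_apply MeasurableSet.of_discrete]
  have hmono : (PMF.uniformOfFintype (Fin n → Fin K)).toMeasure (C ∩ A)
      ≤ (Ds.card : ENNReal) * N := by
    rw [← hmeas Ds]
    exact MeasureTheory.measure_mono hsub
  have hC0 : (Cs.card : ENNReal) ≠ 0 := Nat.cast_ne_zero.2 hCsne.ne'
  have hCtop : (Cs.card : ENNReal) ≠ ⊤ := ENNReal.natCast_ne_top _
  calc ((PMF.uniformOfFintype (Fin n → Fin K)).toMeasure C)⁻¹
        * (PMF.uniformOfFintype (Fin n → Fin K)).toMeasure (C ∩ A)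
      ≤ ((PMF.uniformOfFintype (Fin n → Fin K)).toMeasure C)⁻¹ * ((Ds.card : ENNReal) * N) :=
        mul_le_mul_right hmono _
    _ ≤ ((K : ENNReal) ^ (Fintype.card V - 2 - u))⁻¹ := by
        rw [hmC, ← hTcard, ENNReal.mul_inv (Or.inl hC0) (Or.inl hCtop)]
        have hmul : (Cs.card : ENNReal)⁻¹ * N⁻¹ * ((Ds.card : ENNReal) * N)
            = (Cs.card : ENNReal)⁻¹ * (Ds.card : ENNReal) * (N⁻¹ * N) := by
          ring
        rw [hmul, ENNReal.inv_mul_cancel hNne hNnetop, mul_one,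
          ENNReal.le_inv_iff_mul_le, mul_assoc]
        calc (Cs.card : ENNReal)⁻¹ * ((Ds.card : ENNReal) * (K : ENNReal) ^ TF.card)
            ≤ (Cs.card : ENNReal)⁻¹ * (Cs.card : ENNReal) := by
              refine mul_le_mul_right ?_ _
              exact_mod_cast hcount
          _ = 1 := ENNReal.inv_mul_cancel hC0 hCtop
end
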